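/- arXiv:1807.07613 — 6 statements merged into one kernel-verified Lean document; each statement's English description precedes it below -/
import Mathlib

section
/- Let A' be a central hyperplane arrangement in K^ℓ (char K = 0), H a hyperplane not in A', and A = A' ∪ {H}. If |A^H| ≤ |A'| − d for some positive integer d, then every set of homogeneous generators of the logarithmic derivation module D(A') contains an element of degree at least d. -/
open MvPolynomial

/-- The polynomial ring `S = K[x_1, ..., x_ℓ]`. -/
abbrev MvS (K : Type*) [Field K] (ℓ : ℕ) := MvPolynomial (Fin ℓ) K

variable {K : Type*} [Field K] {ℓ : ℕ}

/-- The linear functional on `K^ℓ` with coefficient vector `c`. -/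
noncomputable def ellf (c : Fin ℓ → K) : (Fin ℓ → K) →ₗ[K] K :=
  ∑ i, c i • LinearMap.proj i

/-- The hyperplane (through the origin) with coefficient vector `c`. -/
noncomputable def hypl (c : Fin ℓ → K) : Submodule K (Fin ℓ → K) :=
  LinearMap.ker (ellf c)

/-- The degree-one defining form `α = ∑ c_i x_i` of the hyperplane with coefficients `c`. -/
noncomputable def linForm (c : Fin ℓ → K) : MvS K ℓ := ∑ i, C (c i) * X i

/-- The defining polynomial `Q(A) = ∏_{H ∈ A} α_H` of an arrangement given by a finite
set of coefficient vectors. -/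
noncomputable def Qpoly (A : Finset (Fin ℓ → K)) : MvS K ℓ := ∏ c ∈ A, linForm c

/-- The module of logarithmic derivations of a reduced defining polynomial `Q`:
derivations `θ = ∑ θ_i ∂_i` (identified with their coefficient tuples) with `θ(Q) ∈ Q·S`. -/
def DerQ {K : Type*} [Field K] {ℓ : ℕ} (Q : MvS K ℓ) : Set (Fin ℓ → MvS K ℓ) :=
  {θ | Q ∣ ∑ i, θ i * pderiv i Q}

/-- The logarithmic derivation module `D(A)` of an arrangement. -/
noncomputable def DerA (A : Finset (Fin ℓ → K)) : Set (Fin ℓ → MvS K ℓ) :=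
  DerQ (Qpoly A)

/-- A derivation is homogeneous of degree `d` if all of its coefficient polynomials are. -/
def IsHomog {K : Type*} [Field K] {ℓ : ℕ} (θ : Fin ℓ → MvS K ℓ) (d : ℕ) : Prop :=
  ∀ i, (θ i).IsHomogeneous d

/-- A finite set of coefficient vectors honestly represents a central arrangement:
all forms are nonzero and no two define the same hyperplane. -/
def IsArrangement (A : Finset (Fin ℓ → K)) : Prop :=
  (∀ c ∈ A, c ≠ 0) ∧ ∀ c ∈ A, ∀ c' ∈ A, hypl c = hypl c' → c = c'

/-- `|(A ∪ {H})^H|`, the number of distinct intersections `H' ∩ H` for `H' ∈ A`. -/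
noncomputable def restrictCount (A : Finset (Fin ℓ → K)) (h : Fin ℓ → K) : ℕ :=
  letI := Classical.decEq (Submodule K (Fin ℓ → K))
  (A.image fun c => hypl c ⊓ hypl h).card

/-- `h` defines a genuine hyperplane that does not belong to the arrangement `A`. -/
def NotInArr (A : Finset (Fin ℓ → K)) (h : Fin ℓ → K) : Prop :=
  h ≠ 0 ∧ ∀ c ∈ A, hypl c ≠ hypl h

/-- `G` is a set of generators of `D(A)` as an `S`-module. -/
def Generates (A : Finset (Fin ℓ → K)) (G : Set (Fin ℓ → MvS K ℓ)) : Prop :=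
  (∀ θ ∈ G, θ ∈ DerA A) ∧ ∀ θ ∈ DerA A, θ ∈ Submodule.span (MvS K ℓ) G

/-- `G` is a minimal set of generators of `D(A)`. -/
def IsMinGen (A : Finset (Fin ℓ → K)) (G : Set (Fin ℓ → MvS K ℓ)) : Prop :=
  Generates A G ∧ ∀ G' ⊂ G, ¬ Generates A G'

/-- Every member of `G` is a nonzero homogeneous derivation. -/
def HomogGens {K : Type*} [Field K] {ℓ : ℕ} (G : Set (Fin ℓ → MvS K ℓ)) : Prop :=
  ∀ θ ∈ G, θ ≠ 0 ∧ ∃ d, IsHomog θ d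

/-- `d` is the maximal degree occurring among the (nonzero homogeneous) members of `G`. -/
def MaxDeg {K : Type*} [Field K] {ℓ : ℕ} (G : Set (Fin ℓ → MvS K ℓ)) (d : ℕ) : Prop :=
  (∀ θ ∈ G, ∀ e, IsHomog θ e → e ≤ d) ∧ ∃ θ ∈ G, IsHomog θ d

/-- The minimal restriction number `t_A`. -/
noncomputable def tA (A : Finset (Fin ℓ → K)) : ℕ :=
  sInf {n | ∃ h : Fin ℓ → K, NotInArr A h ∧ n = restrictCount A h}

/-- The intersection `∩_{c ∈ B} H_c` of the hyperplanes of `B`. -/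
noncomputable def interSub (B : Finset (Fin ℓ → K)) : Submodule K (Fin ℓ → K) :=
  ⨅ c ∈ B, hypl c

/-- The characteristic polynomial of a central arrangement, via Whitney's formula
`χ(A,t) = ∑_{B ⊆ A} (-1)^{|B|} t^{dim ∩B}`. -/
noncomputable def charPolyA (A : Finset (Fin ℓ → K)) : Polynomial ℤ :=
  ∑ B ∈ A.powerset,
    ((-1 : Polynomial ℤ) ^ B.card) * Polynomial.X ^ (Module.finrank K (interSub B))

/-- `D(Q)` is a free `S`-module with a homogeneous basis of degrees `e 0, ..., e (ℓ-1)`. -/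
def IsFreeQWithExp {K : Type*} [Field K] {ℓ : ℕ} (Q : MvS K ℓ) (e : Fin ℓ → ℕ) : Prop :=
  ∃ θ : Fin ℓ → (Fin ℓ → MvS K ℓ),
    (∀ i, θ i ∈ DerQ Q ∧ θ i ≠ 0 ∧ IsHomog (θ i) (e i)) ∧
    LinearIndependent (MvS K ℓ) θ ∧
    ∀ φ ∈ DerQ Q, φ ∈ Submodule.span (MvS K ℓ) (Set.range θ)

/-- `D(Q)` is a free `S`-module. -/
def IsFreeQ {K : Type*} [Field K] {ℓ : ℕ} (Q : MvS K ℓ) : Prop :=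
  ∃ e, IsFreeQWithExp Q e

/-- The arrangement `A` is free. -/
noncomputable def IsFreeArr (A : Finset (Fin ℓ → K)) : Prop := IsFreeQ (Qpoly A)

/-- The rank of a set of hyperplanes: the codimension of their common intersection,
i.e. the dimension of the span of their defining functionals. -/
noncomputable def rkSet (s : Set (Fin ℓ → K)) : ℕ :=
  Module.finrank K (Submodule.span K s)

/-- The Euler derivation `θ_E = ∑ x_i ∂_i`. -/
noncomputable def eulerDer (K : Type*) [Field K] (ℓ : ℕ) : Fin ℓ → MvS K ℓ :=
  fun i => X i

/-- `B` is solvable in `A` (Jambu–Papadima). -/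
def Solvable (B A : Finset (Fin ℓ → K)) : Prop :=
  B ⊆ A ∧
  (∀ α ∈ B, ∀ β ∈ B, α ≠ β → ∀ a ∈ A, a ∉ B → rkSet {α, β, a} = 3) ∧
  (∀ a ∈ A, a ∉ B → ∀ b ∈ A, b ∉ B → a ≠ b → ∃ α ∈ B, rkSet {a, b, α} = 2) ∧
  (∀ a ∈ A, a ∉ B → ∀ b ∈ A, b ∉ B → ∀ c ∈ A, c ∉ B →
    a ≠ b → a ≠ c → b ≠ c →
    ∀ α ∈ B, ∀ β ∈ B, ∀ γ ∈ B,
      rkSet {a, b, α} = 2 → rkSet {a, c, β} = 2 → rkSet {b, c, γ} = 2 →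
      rkSet {α, β, γ} ≤ 2)

/-- The hyperplane `{x_i = x_j}` of a graphic arrangement. -/
noncomputable def edgeHyp (K : Type*) [Field K] {ℓ : ℕ} (i j : Fin ℓ) :
    Submodule K (Fin ℓ → K) :=
  LinearMap.ker ((LinearMap.proj (R := K) (φ := fun _ : Fin ℓ => K) i
    - LinearMap.proj (R := K) (φ := fun _ : Fin ℓ => K) j))

/-- The coefficient vector of the form `x_i - x_j`. -/
def eform (K : Type*) [Field K] {ℓ : ℕ} (i j : Fin ℓ) : Fin ℓ → K :=
  fun t => if t = i then 1 else if t = j then -1 else 0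

/-- The set of defining forms of the graphic arrangement `A_G`. -/
noncomputable def graphForms (K : Type*) [Field K] {ℓ : ℕ} (G : SimpleGraph (Fin ℓ)) :
    Finset (Fin ℓ → K) :=
  letI := Classical.decEq (Fin ℓ → K)
  letI : DecidablePred (fun p : Fin ℓ × Fin ℓ => G.Adj p.1 p.2 ∧ p.1 < p.2) :=
    fun _ => Classical.propDecidable _
  Finset.image (fun p : Fin ℓ × Fin ℓ => eform K p.1 p.2)
    (Finset.univ.filter fun p : Fin ℓ × Fin ℓ => G.Adj p.1 p.2 ∧ p.1 < p.2)

/-- `Tri(G)`: the maximal number of new triangles created by adding a single edge. -/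
noncomputable def TriG {ℓ : ℕ} (G : SimpleGraph (Fin ℓ)) : ℕ :=
  sSup {n | ∃ u v : Fin ℓ, u ≠ v ∧ ¬ G.Adj u v ∧
    n = {w | G.Adj u w ∧ G.Adj v w}.ncard}

/-!
Suppose every generator had degree `< d`. Terao's congruence `θ(α_H) ≡ c·b (mod α_H)`, with
`deg b = |A'| - |A^H| ≥ d`, then forces `α_H ∣ θ(α_H)` for every generator, hence for every
`θ ∈ D(A')`; but `Q(A')·∂_j` with `h_j ≠ 0` violates this.

The congruence is proved by restricting to `H`, i.e. substituting the projection onto `H`.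
The hyperplanes of `A'` cutting out the same `X ∈ A^H` lie in a pencil with `H`, and a fibre of
size `n_X` makes the restricted form `α_X` divide `θ(α_H)|_H` to the power `n_X - 1`. The `α_X`
are pairwise non-associate primes, so a nonzero `θ(α_H)|_H` of degree `deg θ` would have degree
at least `∑ (n_X - 1) = |A'| - |A^H|`.
-/

open Function

lemma ellf_apply (c x : Fin ℓ → K) : ellf c x = c ⬝ᵥ x := by
  simp [ellf, dotProduct]

lemma mem_hypl {c x : Fin ℓ → K} : x ∈ hypl c ↔ c ⬝ᵥ x = 0 := by
  rw [hypl, LinearMap.mem_ker, ellf_apply]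

lemma hypl_smul {t : K} (ht : t ≠ 0) (c : Fin ℓ → K) : hypl (t • c) = hypl c := by
  ext x
  simp [mem_hypl, smul_dotProduct, ht]

lemma hypl_sub_smul_inf (c h : Fin ℓ → K) (s : K) :
    hypl (c - s • h) ⊓ hypl h = hypl c ⊓ hypl h := by
  ext x
  simp only [Submodule.mem_inf, mem_hypl, sub_dotProduct, smul_dotProduct, smul_eq_mul]
  constructor <;> rintro ⟨hc, hh⟩ <;> simp_all

lemma exists_eq_smul_add_smul_of_inf_le {c c₀ h : Fin ℓ → K}
    (hle : hypl c₀ ⊓ hypl h ≤ hypl c) : ∃ a b : K, c = a • h + b • c₀ := by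
  have hker : ⨅ i, LinearMap.ker (![ellf h, ellf c₀] i) ≤ LinearMap.ker (ellf c) :=
    fun x hx => by
      simp only [Submodule.mem_iInf, Fin.forall_fin_two] at hx
      exact hle ⟨hx.2, hx.1⟩
  obtain ⟨g, hg⟩ :=
    (Submodule.mem_span_range_iff_exists_fun K).mp (mem_span_of_iInf_ker_le_ker hker)
  refine ⟨g 0, g 1, funext fun i => ?_⟩
  simpa [ellf_apply, dotProduct_single] using (LinearMap.congr_fun hg (Pi.single i 1)).symm

lemma exists_eq_smul_add_smul_of_hypl_inf_eq {c c₀ h : Fin ℓ → K} (hc : c ≠ 0)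
    (hne : hypl c ≠ hypl h) (heq : hypl c ⊓ hypl h = hypl c₀ ⊓ hypl h) :
    ∃ a b : K, b ≠ 0 ∧ c = a • h + b • c₀ := by
  obtain ⟨a, b, rfl⟩ := exists_eq_smul_add_smul_of_inf_le (heq ▸ inf_le_left)
  refine ⟨a, b, fun hb => hne ?_, rfl⟩
  subst hb
  rw [zero_smul, add_zero] at hc ⊢
  exact hypl_smul (left_ne_zero_of_smul hc) h

lemma exists_dotProduct_eq_one {h : Fin ℓ → K} (hh : h ≠ 0) : ∃ w, h ⬝ᵥ w = 1 := by
  obtain ⟨j, hj⟩ : ∃ j, h j ≠ 0 := ne_iff.mp hh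
  exact ⟨Pi.single j (h j)⁻¹, by simp [dotProduct_single, hj]⟩

@[simp]
lemma linForm_zero : linForm (0 : Fin ℓ → K) = 0 := by
  simp [linForm]

lemma linForm_add (u v : Fin ℓ → K) : linForm (u + v) = linForm u + linForm v := by
  simp [linForm, add_mul, Finset.sum_add_distrib]

lemma linForm_smul (t : K) (v : Fin ℓ → K) : linForm (t • v) = C t * linForm v := by
  simp [linForm, Finset.mul_sum, mul_assoc]

lemma linForm_sub (u v : Fin ℓ → K) : linForm (u - v) = linForm u - linForm v := by
  simp [linForm, sub_mul, Finset.sum_sub_distrib]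

lemma coeff_linForm (v : Fin ℓ → K) (i : Fin ℓ) :
    coeff (Finsupp.single i 1) (linForm v) = v i := by
  simp [linForm, coeff_sum, coeff_X, Finsupp.single_left_inj]

lemma linForm_injective : Injective (linForm : (Fin ℓ → K) → MvS K ℓ) :=
  fun u v huv => funext fun i => by rw [← coeff_linForm u, huv, coeff_linForm]

lemma linForm_eq_zero_iff {v : Fin ℓ → K} : linForm v = 0 ↔ v = 0 := by
  rw [← linForm_injective.eq_iff, linForm_zero]

lemma isHomogeneous_linForm (v : Fin ℓ → K) : (linForm v).IsHomogeneous 1 :=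
  IsHomogeneous.sum _ _ _ fun _ _ => isHomogeneous_C_mul_X _ _

lemma pderiv_linForm (v : Fin ℓ → K) (i : Fin ℓ) : pderiv i (linForm v) = C (v i) := by
  simp [linForm, pderiv_X, Pi.single_apply]

lemma prime_linForm {v : Fin ℓ → K} (hv : v ≠ 0) : Prime (linForm v) := by
  obtain ⟨i, hi⟩ := ne_iff.mp hv
  refine (irreducible_of_totalDegree_eq_one ?_ fun x hx => ?_).prime
  · exact (isHomogeneous_linForm v).totalDegree (linForm_eq_zero_iff.not.mpr hv)
  · have := hx (Finsupp.single i 1)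
    rw [coeff_linForm] at this
    exact (ne_zero_of_dvd_ne_zero hi this).isUnit

/-- Substitution of the projection `x ↦ x - (h ⬝ᵥ x) • w`; when `h ⬝ᵥ w = 1` this is the
projection of `K^ℓ` onto `hypl h` along `w`, so it restricts polynomials to `hypl h`. -/
noncomputable def projAlong (h w : Fin ℓ → K) : MvS K ℓ →ₐ[K] MvS K ℓ :=
  aeval fun i => X i - C (w i) * linForm h

lemma projAlong_linForm (h w v : Fin ℓ → K) :
    projAlong h w (linForm v) = linForm (v - (v ⬝ᵥ w) • h) := by
  rw [linForm_sub, linForm_smul, dotProduct, map_sum, Finset.sum_mul, linForm]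
  simp only [projAlong, map_sum, map_mul, aeval_C, aeval_X, algebraMap_eq, mul_sub,
    Finset.sum_sub_distrib, mul_assoc]

lemma projAlong_linForm_self {h w : Fin ℓ → K} (hw : h ⬝ᵥ w = 1) :
    projAlong h w (linForm h) = 0 := by
  rw [projAlong_linForm, hw, one_smul, sub_self, linForm_zero]

lemma linForm_dvd_sub_projAlong (h w : Fin ℓ → K) (f : MvS K ℓ) :
    linForm h ∣ f - projAlong h w f := by
  have hmk : (Ideal.Quotient.mkₐ K (Ideal.span {linForm h})).comp (projAlong h w) =
      Ideal.Quotient.mkₐ K (Ideal.span {linForm h}) :=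
    algHom_ext fun i => by simp [projAlong]
  rw [← Ideal.mem_span_singleton, ← Ideal.Quotient.eq]
  exact (AlgHom.congr_fun hmk f).symm

lemma projAlong_eq_zero_iff {h w : Fin ℓ → K} (hw : h ⬝ᵥ w = 1) {f : MvS K ℓ} :
    projAlong h w f = 0 ↔ linForm h ∣ f := by
  refine ⟨fun hf => by simpa [hf] using linForm_dvd_sub_projAlong h w f, ?_⟩
  rintro ⟨g, rfl⟩
  rw [map_mul, projAlong_linForm_self hw, zero_mul]

lemma isHomogeneous_projAlong (h w : Fin ℓ → K) {f : MvS K ℓ} {n : ℕ}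
    (hf : f.IsHomogeneous n) : (projAlong h w f).IsHomogeneous n := by
  rw [projAlong, aeval_def]
  simpa using hf.eval₂ (algebraMap K (MvS K ℓ)) _ (fun r => isHomogeneous_C _ r)
    fun i => (isHomogeneous_X K i).sub ((isHomogeneous_linForm h).C_mul (w i))

lemma linForm_dvd_linForm {u v : Fin ℓ → K} (hu : u ≠ 0) (hdvd : linForm u ∣ linForm v) :
    ∃ t : K, v = t • u := by
  obtain ⟨w, hw⟩ := exists_dotProduct_eq_one hu
  refine ⟨v ⬝ᵥ w, sub_eq_zero.mp (linForm_eq_zero_iff.mp ?_)⟩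
  rw [← projAlong_linForm u w v, projAlong_eq_zero_iff hw]
  exact hdvd

lemma not_linForm_dvd_linForm {c c' : Fin ℓ → K} (hc : c ≠ 0) (hne : hypl c ≠ hypl c') :
    ¬ linForm c' ∣ linForm c := by
  intro hdvd
  rcases eq_or_ne c' 0 with rfl | hc'
  · rw [linForm_zero, zero_dvd_iff, linForm_eq_zero_iff] at hdvd
    exact hc hdvd
  · obtain ⟨t, rfl⟩ := linForm_dvd_linForm hc' hdvd
    exact hne (hypl_smul (left_ne_zero_of_smul hc) c')

noncomputable def derOp (θ : Fin ℓ → MvS K ℓ) : Derivation K (MvS K ℓ) (MvS K ℓ) :=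
  ∑ i, θ i • pderiv i

lemma derOp_apply (θ : Fin ℓ → MvS K ℓ) (f : MvS K ℓ) :
    derOp θ f = ∑ i, θ i * pderiv i f := by
  change Derivation.coeFnAddMonoidHom (∑ i, θ i • pderiv i) f = _
  simp [map_sum, Finset.sum_apply]

lemma mem_derQ_iff {Q : MvS K ℓ} {θ : Fin ℓ → MvS K ℓ} : θ ∈ DerQ Q ↔ Q ∣ derOp θ Q := by
  rw [derOp_apply]; rfl

lemma derOp_linForm (θ : Fin ℓ → MvS K ℓ) (v : Fin ℓ → K) :
    derOp θ (linForm v) = ∑ i, θ i * C (v i) := by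
  simp [derOp_apply, pderiv_linForm]

lemma derOp_C_mul (θ : Fin ℓ → MvS K ℓ) (a : K) (f : MvS K ℓ) :
    derOp θ (C a * f) = C a * derOp θ f := by
  rw [← smul_eq_C_mul, ← smul_eq_C_mul, Derivation.map_smul]

lemma isHomogeneous_derOp_linForm {θ : Fin ℓ → MvS K ℓ} {e : ℕ} (hθ : IsHomog θ e)
    (v : Fin ℓ → K) : (derOp θ (linForm v)).IsHomogeneous e := by
  rw [derOp_linForm]
  exact IsHomogeneous.sum _ _ _ fun i _ => by simpa using (hθ i).mul (isHomogeneous_C _ (v i))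

def derQSubmodule (Q : MvS K ℓ) : Submodule (MvS K ℓ) (Fin ℓ → MvS K ℓ) where
  carrier := DerQ Q
  zero_mem' := by simp [DerQ]
  add_mem' {θ θ'} hθ hθ' := by
    simpa [DerQ, add_mul, Finset.sum_add_distrib] using dvd_add hθ hθ'
  smul_mem' r θ hθ := by
    simpa [DerQ, mul_assoc, ← Finset.mul_sum] using dvd_mul_of_dvd_right hθ r

lemma mem_derQ_of_mem_derQ_mul {f g : MvS K ℓ} {θ : Fin ℓ → MvS K ℓ} (hθ : θ ∈ DerQ (f * g))
    (hf : Prime f) (hfg : ¬ f ∣ g) : θ ∈ DerQ f := by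
  rw [mem_derQ_iff, Derivation.leibniz, smul_eq_mul, smul_eq_mul] at *
  have hsum : f ∣ f * derOp θ g + g * derOp θ f := (dvd_mul_right f g).trans hθ
  exact (hf.dvd_or_dvd ((dvd_add_right (dvd_mul_right _ _)).mp hsum)).resolve_left hfg

lemma pow_card_sub_one_dvd_map_of_pencil {R T ι : Type*} [CommRing R] [DecompositionMonoid R]
    [CommRing T] [IsDomain T] (φ : R →+* T) {s : Finset ι} {f a b : ι → R} {l₁ l₀ P P₀ : R}
    (hrel : (s : Set ι).Pairwise (IsRelPrime on f)) (hb : ∀ i ∈ s, IsUnit (b i))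
    (hf : ∀ i ∈ s, f i = a i * l₁ + b i * l₀) (hdvd : ∀ i ∈ s, f i ∣ a i * P + b i * P₀)
    (hl₁ : φ l₁ = 0) (hl₀ : φ l₀ ≠ 0) : φ l₀ ^ (s.card - 1) ∣ φ P := by
  have hΘ : ∀ i ∈ s, f i ∣ l₀ * P - l₁ * P₀ := fun i hi => by
    rw [← (hb i hi).dvd_mul_left,
      show b i * (l₀ * P - l₁ * P₀) = f i * P - l₁ * (a i * P + b i * P₀) by rw [hf i hi]; ring]
    exact dvd_sub (dvd_mul_right _ _) (dvd_mul_of_dvd_right (hdvd i hi) _)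
  have hmap := map_dvd φ (Finset.prod_dvd_of_isRelPrime hrel hΘ)
  rw [map_prod, map_sub, map_mul, map_mul, hl₁, zero_mul, sub_zero] at hmap
  have hpow : φ l₀ ^ s.card ∣ ∏ i ∈ s, φ (f i) := by
    rw [← Finset.prod_const]
    exact Finset.prod_dvd_prod_of_dvd _ _ fun i hi => by simp [hf i hi, hl₁]
  rcases hcard : s.card with _ | n
  · simp
  · rw [hcard, pow_succ'] at hpow
    simpa using (mul_dvd_mul_iff_left hl₀).mp (hpow.trans hmap)

lemma MvPolynomial.IsHomogeneous.le_of_dvd {σ R : Type*} [CommRing R] [IsDomain R]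
    {p q : MvPolynomial σ R} {m n : ℕ} (hp : p.IsHomogeneous m) (hq : q.IsHomogeneous n)
    (hq0 : q ≠ 0) (hpq : p ∣ q) : m ≤ n := by
  obtain ⟨r, rfl⟩ := hpq
  obtain ⟨hp0, hr0⟩ := mul_ne_zero_iff.mp hq0
  rw [← hp.totalDegree hp0, ← hq.totalDegree hq0, totalDegree_mul_of_isDomain hp0 hr0]
  exact Nat.le_add_right _ _

lemma sum_card_fiber_sub_one_add_card_image {α β : Type*} [DecidableEq β] (s : Finset α)
    (f : α → β) :
    ∑ b ∈ s.image f, ((s.filter (f · = b)).card - 1) + (s.image f).card = s.card := by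
  rw [Finset.card_eq_sum_card_image f s, Finset.card_eq_sum_ones, ← Finset.sum_add_distrib]
  refine Finset.sum_congr rfl fun b hb => Nat.sub_add_cancel ?_
  obtain ⟨a, ha, rfl⟩ := Finset.mem_image.mp hb
  exact Finset.card_pos.mpr ⟨a, Finset.mem_filter.mpr ⟨ha, rfl⟩⟩

variable {A : Finset (Fin ℓ → K)} {h w : Fin ℓ → K}

lemma IsArrangement.not_linForm_dvd (hA : IsArrangement A) {c c' : Fin ℓ → K} (hc : c ∈ A)
    (hc' : c' ∈ A) (hne : c ≠ c') : ¬ linForm c ∣ linForm c' :=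
  not_linForm_dvd_linForm (hA.1 c' hc') fun heq => hne (hA.2 c hc c' hc' heq.symm)

lemma IsArrangement.pairwise_isRelPrime (hA : IsArrangement A) :
    (A : Set (Fin ℓ → K)).Pairwise (IsRelPrime on linForm) := fun c hc _ hc' hne =>
  (prime_linForm (hA.1 c hc)).irreducible.isRelPrime_iff_not_dvd.mpr (hA.not_linForm_dvd hc hc' hne)

lemma IsArrangement.mem_derQ_linForm (hA : IsArrangement A) {θ : Fin ℓ → MvS K ℓ}
    (hθ : θ ∈ DerA A) {c : Fin ℓ → K} (hc : c ∈ A) : θ ∈ DerQ (linForm c) := by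
  classical
  rw [DerA, Qpoly, ← Finset.mul_prod_erase A linForm hc] at hθ
  refine mem_derQ_of_mem_derQ_mul hθ (prime_linForm (hA.1 c hc)) fun hdvd => ?_
  obtain ⟨c', hc', hdvd'⟩ := (prime_linForm (hA.1 c hc)).exists_mem_finset_dvd hdvd
  exact hA.not_linForm_dvd hc (Finset.mem_of_mem_erase hc') (Finset.ne_of_mem_erase hc').symm hdvd'

lemma NotInArr.not_linForm_dvd_Qpoly (hA : IsArrangement A) (hh : NotInArr A h) :
    ¬ linForm h ∣ Qpoly A := fun hdvd => by
  obtain ⟨c, hc, hdvd'⟩ := (prime_linForm hh.1).exists_mem_finset_dvd hdvd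
  exact not_linForm_dvd_linForm (hA.1 c hc) (hh.2 c hc) hdvd'

lemma not_derA_subset_derQ_linForm (hA : IsArrangement A) (hh : NotInArr A h) :
    ¬ DerA A ⊆ DerQ (linForm h) := by
  classical
  obtain ⟨j, hj⟩ : ∃ j, h j ≠ 0 := ne_iff.mp hh.1
  intro hsub
  have hθ : Pi.single j (Qpoly A) ∈ DerA A := by
    simp [DerA, mem_derQ_iff, derOp_apply, Pi.single_apply]
  have hθh := mem_derQ_iff.mp (hsub hθ)
  simp only [derOp_linForm, Pi.single_apply, ite_mul, zero_mul, Finset.sum_ite_eq',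
    Finset.mem_univ, if_true] at hθh
  exact hh.not_linForm_dvd_Qpoly hA ((hj.isUnit.map C).dvd_mul_right.mp hθh)

lemma prime_projAlong_linForm {c : Fin ℓ → K} (hc : c ≠ 0) (hne : hypl c ≠ hypl h) :
    Prime (projAlong h w (linForm c)) := by
  rw [projAlong_linForm]
  refine prime_linForm fun h0 => hne ?_
  rw [sub_eq_zero] at h0
  rw [h0] at hc ⊢
  exact hypl_smul (left_ne_zero_of_smul hc) h

lemma hypl_inf_eq_of_projAlong_dvd {c c' : Fin ℓ → K} (hc' : projAlong h w (linForm c') ≠ 0)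
    (hdvd : projAlong h w (linForm c) ∣ projAlong h w (linForm c')) :
    hypl c ⊓ hypl h = hypl c' ⊓ hypl h := by
  simp only [projAlong_linForm] at hc' hdvd
  have hr : c - (c ⬝ᵥ w) • h ≠ 0 := by
    intro hr
    rw [hr, linForm_zero, zero_dvd_iff] at hdvd
    exact hc' hdvd
  obtain ⟨t, ht⟩ := linForm_dvd_linForm hr hdvd
  have ht0 : t ≠ 0 := by
    rintro rfl
    rw [ht, zero_smul, linForm_zero] at hc'
    exact hc' rfl
  rw [← hypl_sub_smul_inf c h (c ⬝ᵥ w), ← hypl_sub_smul_inf c' h (c' ⬝ᵥ w), ht, hypl_smul ht0]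

lemma projAlong_pow_dvd_derOp [DecidableEq (Submodule K (Fin ℓ → K))] (hA : IsArrangement A)
    (hh : NotInArr A h) (hw : h ⬝ᵥ w = 1) {θ : Fin ℓ → MvS K ℓ} (hθ : θ ∈ DerA A)
    {c₀ : Fin ℓ → K} (hc₀ : c₀ ∈ A) :
    projAlong h w (linForm c₀) ^ ((A.filter fun c => hypl c ⊓ hypl h = hypl c₀ ⊓ hypl h).card - 1)
      ∣ projAlong h w (derOp θ (linForm h)) := by
  have hpencil : ∀ c ∈ A.filter fun c => hypl c ⊓ hypl h = hypl c₀ ⊓ hypl h,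
      ∃ a b : K, b ≠ 0 ∧ c = a • h + b • c₀ := fun c hc => by
    obtain ⟨hcA, heq⟩ := Finset.mem_filter.mp hc
    exact exists_eq_smul_add_smul_of_hypl_inf_eq (hA.1 c hcA) (hh.2 c hcA) heq
  choose! a b hb hab using hpencil
  have hform : ∀ c ∈ A.filter fun c => hypl c ⊓ hypl h = hypl c₀ ⊓ hypl h,
      linForm c = C (a c) * linForm h + C (b c) * linForm c₀ := fun c hc => by
    rw [← linForm_smul, ← linForm_smul, ← linForm_add, ← hab c hc]
  refine pow_card_sub_one_dvd_map_of_pencil (projAlong h w).toRingHom (f := linForm)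
    (a := fun c => C (a c)) (b := fun c => C (b c)) (P₀ := derOp θ (linForm c₀))
    (hA.pairwise_isRelPrime.mono (Finset.coe_subset.mpr (Finset.filter_subset _ _)))
    (fun c hc => (hb c hc).isUnit.map C) hform (fun c hc => ?_)
    (projAlong_linForm_self hw) (prime_projAlong_linForm (hA.1 _ hc₀) (hh.2 _ hc₀)).ne_zero
  have hcθ := mem_derQ_iff.mp (hA.mem_derQ_linForm hθ (Finset.mem_filter.mp hc).1)
  rwa [hform c hc, map_add, derOp_C_mul, derOp_C_mul, ← hform c hc] at hcθ

theorem mem_derQ_linForm_of_restrictCount_add_lt (hA : IsArrangement A) (hh : NotInArr A h)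
    {θ : Fin ℓ → MvS K ℓ} (hθ : θ ∈ DerA A) {e : ℕ} (hθe : IsHomog θ e)
    (hlt : restrictCount A h + e < A.card) : θ ∈ DerQ (linForm h) := by
  classical
  obtain ⟨w, hw⟩ := exists_dotProduct_eq_one hh.1
  set fib : (Fin ℓ → K) → Submodule K (Fin ℓ → K) := fun c => hypl c ⊓ hypl h
  set B := A.image fib
  set rep := invFunOn fib A
  have hrep : ∀ X ∈ B, rep X ∈ A ∧ fib (rep X) = X := fun X hX =>
    invFunOn_pos (by simpa using Finset.mem_image.mp hX)
  set β := fun X => projAlong h w (linForm (rep X))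
  have hβ : ∀ X ∈ B, Prime (β X) := fun X hX =>
    prime_projAlong_linForm (hA.1 _ (hrep X hX).1) (hh.2 _ (hrep X hX).1)
  set m := fun X => (A.filter (fib · = X)).card - 1
  rw [mem_derQ_iff, ← projAlong_eq_zero_iff hw]
  by_contra hP
  have hdvd : ∏ X ∈ B, β X ^ m X ∣ projAlong h w (derOp θ (linForm h)) := by
    refine Finset.prod_dvd_of_isRelPrime (fun X hX Y hY hXY => ?_) fun X hX => ?_
    · refine IsRelPrime.pow ((hβ X hX).irreducible.isRelPrime_iff_not_dvd.mpr fun hd => hXY ?_)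
      rw [← (hrep X hX).2, ← (hrep Y hY).2]
      exact hypl_inf_eq_of_projAlong_dvd (hβ Y hY).ne_zero hd
    · have hX' : hypl (rep X) ⊓ hypl h = X := (hrep X hX).2
      simpa only [hX'] using projAlong_pow_dvd_derOp hA hh hw hθ (hrep X hX).1
  have hdeg : ∑ X ∈ B, m X ≤ e := IsHomogeneous.le_of_dvd
    (IsHomogeneous.prod _ _ _ fun X _ => by
      simpa using (isHomogeneous_projAlong h w (isHomogeneous_linForm (rep X))).pow (m X))
    (isHomogeneous_projAlong h w (isHomogeneous_derOp_linForm hθe h)) hP hdvd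
  have hcount : ∑ X ∈ B, m X + B.card = A.card := sum_card_fiber_sub_one_add_card_image A fib
  have hB : restrictCount A h = B.card := by
    unfold restrictCount; congr!
  omega

theorem stmt0_general {K : Type*} [Field K] {ℓ : ℕ}
    (A' : Finset (Fin ℓ → K)) (hA' : IsArrangement A')
    (h : Fin ℓ → K) (hh : NotInArr A' h)
    (d : ℕ)
    (hres : restrictCount A' h + d ≤ A'.card)
    (G : Set (Fin ℓ → MvS K ℓ)) (hGen : Generates A' G) (hhom : HomogGens G) :
    ∃ θ ∈ G, ∃ e, d ≤ e ∧ IsHomog θ e := by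
  by_contra! hsmall
  have hG : G ⊆ derQSubmodule (linForm h) := fun θ hθ => by
    obtain ⟨-, e, he⟩ := hhom θ hθ
    have hed : e < d := Nat.lt_of_not_le fun hde => hsmall θ hθ e hde he
    exact mem_derQ_linForm_of_restrictCount_add_lt hA' hh (hGen.1 θ hθ) he (by omega)
  exact not_derA_subset_derQ_linForm hA' hh fun θ hθ => Submodule.span_le.mpr hG (hGen.2 θ hθ)

/-- if `|A^H| ≤ |A'| - d` (for a positive `d`) then every set of homogeneous
generators of `D(A')` contains an element of degree at least `d`. -/
theorem stmt0 {K : Type*} [Field K] [CharZero K] {ℓ : ℕ}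
    (A' : Finset (Fin ℓ → K)) (hA' : IsArrangement A')
    (h : Fin ℓ → K) (hh : NotInArr A' h)
    (d : ℕ) (hd : 0 < d)
    (hres : restrictCount A' h + d ≤ A'.card)
    (G : Set (Fin ℓ → MvS K ℓ)) (hGen : Generates A' G) (hhom : HomogGens G) :
    ∃ θ ∈ G, ∃ e, d ≤ e ∧ IsHomog θ e :=
  stmt0_general A' hA' h hh d hres G hGen hhom
end

section
/- Let A' be a central arrangement in K^ℓ with maximal degree d_A' among a minimal set of homogeneous generators of D(A'). Then there is no hyperplane H ⊂ K^ℓ with H ∉ A' such that |A'| − d_{A'} > |(A' ∪ {H})^H|. Equivalently, for every hyperplane H not in A', |(A' ∪ {H})^H| ≥ |A'| − d_{A'}. -/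
open MvPolynomial

variable {K : Type*} [Field K] {ℓ : ℕ}

/-!
Choose a generator `θ` of `D(A')` that is not tangent to `H = ker α_H`; one exists because
`Q(A') ∂_j ∈ D(A')` sends `α_H` to `h_j Q(A') ∉ (α_H)`. Restrict polynomials to `H` by a
substitution `σ`. If `m_X` hyperplanes of `A'` meet `H` in `X`, pick one of them, `α_X`; each
of the others has a form `α_c = a α_H + b α_X` with `b ≠ 0`, and `α_c ∣ θ(α_c)` gives
`α_c ∣ α_H θ(α_X) - α_X θ(α_H)`. Multiplying over the `m_X` forms and applying `σ` yields
`σ(α_X)^(m_X - 1) ∣ σ(θ(α_H))`. The `σ(α_X)` are pairwise coprime linear forms and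
`σ(θ(α_H)) ≠ 0` is homogeneous of degree `deg θ ≤ d`, so `|A'| - |A'^H| = ∑ (m_X - 1) ≤ d`.
-/

lemma Finset.card_eq_sum_card_fiberwise_sub_one_add_card_image {ι M : Type*} [DecidableEq M]
    (f : ι → M) (s : Finset ι) :
    s.card = ∑ b ∈ s.image f, ({a ∈ s | f a = b}.card - 1) + (s.image f).card := by
  rw [Finset.card_eq_sum_card_image f s, Finset.card_eq_sum_ones (s.image f),
    ← Finset.sum_add_distrib]
  refine Finset.sum_congr rfl fun b hb ↦ ?_
  obtain ⟨a, ha, rfl⟩ := Finset.mem_image.mp hb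
  have : 0 < {x ∈ s | f x = f a}.card := Finset.card_pos.mpr ⟨a, by simp [ha]⟩
  omega

lemma MvPolynomial.IsHomogeneous.le_of_dvd_s3 {σ R : Type*} [CommRing R] [IsDomain R]
    {P F : MvPolynomial σ R} {D e : ℕ} (hP : P.IsHomogeneous D) (hF : F.IsHomogeneous e)
    (hF0 : F ≠ 0) (hdvd : P ∣ F) : D ≤ e := by
  rw [← hP.totalDegree (ne_zero_of_dvd_ne_zero hF0 hdvd), ← hF.totalDegree hF0]
  exact totalDegree_le_of_dvd_of_isDomain hdvd hF0

namespace Arrangement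

section Hyperplane

lemma ellf_apply (c x : Fin ℓ → K) : ellf c x = ∑ i, c i * x i := by
  simp [ellf]

lemma ellf_single (c : Fin ℓ → K) (j : Fin ℓ) : ellf c (Pi.single j 1) = c j := by
  simp [ellf_apply, Pi.single_apply]

lemma ellf_add (a b : Fin ℓ → K) : ellf (a + b) = ellf a + ellf b := by
  ext x
  simp [ellf_apply, add_mul, Finset.sum_add_distrib]

lemma ellf_smul (t : K) (c : Fin ℓ → K) : ellf (t • c) = t • ellf c := by
  ext x
  simp [ellf_apply, Finset.mul_sum, mul_assoc]

lemma ellf_injective : Function.Injective (ellf : (Fin ℓ → K) → _) := fun c c' hcc' ↦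
  funext fun j ↦ by rw [← ellf_single c, ← ellf_single c', hcc']

lemma exists_ellf_eq_one {h : Fin ℓ → K} (h0 : h ≠ 0) : ∃ v, ellf h v = 1 := by
  obtain ⟨j, hj⟩ := Function.ne_iff.mp h0
  exact ⟨(h j)⁻¹ • Pi.single j 1, by simpa [ellf_single] using inv_mul_cancel₀ hj⟩

lemma hypl_smul {t : K} (ht : t ≠ 0) (c : Fin ℓ → K) : hypl (t • c) = hypl c := by
  ext x
  simp [hypl, ellf_smul, ht]

lemma isCoatom_hypl {c : Fin ℓ → K} (hc : c ≠ 0) : IsCoatom (hypl c) := by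
  refine LinearMap.isCoatom_ker_of_surjective ((ellf c).surjective_or_eq_zero.resolve_right ?_)
  exact fun h0 ↦ hc (ellf_injective (by rw [h0, ← zero_smul K (ellf c), ← ellf_smul, zero_smul]))

lemma hypl_eq_of_le {c c' : Fin ℓ → K} (hc : c ≠ 0) (hc' : c' ≠ 0) (hle : hypl c ≤ hypl c') :
    hypl c = hypl c' :=
  (((isCoatom_hypl hc).le_iff_eq (isCoatom_hypl hc').ne_top).mp hle).symm

lemma exists_eq_add_smul_of_inf_le {a b c : Fin ℓ → K} (hle : hypl a ⊓ hypl b ≤ hypl c) :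
    ∃ p q : K, c = p • a + q • b := by
  have hker : ⨅ t : Bool, LinearMap.ker (ellf (cond t a b)) ≤ LinearMap.ker (ellf c) := by
    rwa [iInf_bool_eq]
  obtain ⟨r, hr⟩ :=
    (Submodule.mem_span_range_iff_exists_fun K).mp (mem_span_of_iInf_ker_le_ker hker)
  refine ⟨r true, r false, ellf_injective ?_⟩
  simpa [Fintype.sum_bool, ellf_add, ellf_smul] using hr.symm

lemma inf_hypl_add_smul (h c : Fin ℓ → K) (a : K) {b : K} (hb : b ≠ 0) :
    hypl (a • h + b • c) ⊓ hypl h = hypl c ⊓ hypl h := by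
  ext x
  simp only [Submodule.mem_inf, hypl, LinearMap.mem_ker, ellf_add, ellf_smul,
    LinearMap.add_apply, LinearMap.smul_apply, smul_eq_mul]
  constructor
  · rintro ⟨h1, h2⟩
    rw [h2, mul_zero, zero_add] at h1
    exact ⟨(mul_eq_zero.mp h1).resolve_left hb, h2⟩
  · rintro ⟨h1, h2⟩
    simp [h1, h2]

lemma exists_eq_smul_add_smul_of_inf_eq {h c c' : Fin ℓ → K} (hc : c ≠ 0)
    (hch : hypl c ≠ hypl h) (heq : hypl c ⊓ hypl h = hypl c' ⊓ hypl h) :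
    ∃ a b : K, b ≠ 0 ∧ c = a • h + b • c' := by
  obtain ⟨a, b, rfl⟩ := exists_eq_add_smul_of_inf_le (a := h) (b := c') (c := c)
    (by rw [inf_comm, ← heq]; exact inf_le_left)
  refine ⟨a, b, fun hb ↦ hch ?_, rfl⟩
  have ha : a ≠ 0 := by rintro rfl; simp [hb] at hc
  simp [hb, hypl_smul ha]

end Hyperplane

section LinForm

lemma linForm_add (a b : Fin ℓ → K) : linForm (a + b) = linForm a + linForm b := by
  simp [linForm, add_mul, Finset.sum_add_distrib]

lemma linForm_smul (t : K) (c : Fin ℓ → K) : linForm (t • c) = C t * linForm c := by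
  simp [linForm, Finset.mul_sum, mul_assoc]

lemma linForm_sub (a b : Fin ℓ → K) : linForm (a - b) = linForm a - linForm b := by
  simp [linForm, sub_mul, Finset.sum_sub_distrib]

lemma eval_linForm (x c : Fin ℓ → K) : eval x (linForm c) = ellf c x := by
  simp [linForm, ellf_apply]

lemma coeff_single_linForm (c : Fin ℓ → K) (j : Fin ℓ) :
    coeff (Finsupp.single j 1) (linForm c) = c j := by
  simp [linForm, coeff_sum, coeff_C_mul, coeff_X, Finsupp.single_eq_single_iff]

lemma linForm_ne_zero {c : Fin ℓ → K} (hc : c ≠ 0) : linForm c ≠ 0 := fun h0 ↦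
  hc (funext fun j ↦ by rw [← coeff_single_linForm c j, h0, coeff_zero, Pi.zero_apply])

lemma isHomogeneous_linForm (c : Fin ℓ → K) : (linForm c).IsHomogeneous 1 :=
  IsHomogeneous.sum _ _ _ fun _ _ ↦ isHomogeneous_C_mul_X _ _

lemma prime_linForm {c : Fin ℓ → K} (hc : c ≠ 0) : Prime (linForm c) := by
  obtain ⟨j, hj⟩ := Function.ne_iff.mp hc
  refine (irreducible_of_totalDegree_eq_one
    ((isHomogeneous_linForm c).totalDegree (linForm_ne_zero hc)) fun x hx ↦ ?_).prime
  refine isUnit_iff_ne_zero.mpr fun hx0 ↦ hj ?_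
  simpa [hx0, coeff_single_linForm] using hx (Finsupp.single j 1)

lemma hypl_le_of_linForm_dvd {c c' : Fin ℓ → K} (hdvd : linForm c ∣ linForm c') :
    hypl c ≤ hypl c' := by
  obtain ⟨w, hw⟩ := hdvd
  intro x (hx : ellf c x = 0)
  show ellf c' x = 0
  rw [← eval_linForm, hw, map_mul, eval_linForm, hx, zero_mul]

lemma not_linForm_dvd {c c' : Fin ℓ → K} (hc : c ≠ 0) (hc' : c' ≠ 0)
    (hne : hypl c ≠ hypl c') : ¬ linForm c ∣ linForm c' := fun hdvd ↦
  hne (hypl_eq_of_le hc hc' (hypl_le_of_linForm_dvd hdvd))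

lemma isRelPrime_linForm {c c' : Fin ℓ → K} (hc : c ≠ 0) (hc' : c' ≠ 0)
    (hne : hypl c ≠ hypl c') : IsRelPrime (linForm c) (linForm c') :=
  (prime_linForm hc).irreducible.isRelPrime_iff_not_dvd.mpr (not_linForm_dvd hc hc' hne)

end LinForm

section Derivation

noncomputable def toDerivation :
    (Fin ℓ → MvS K ℓ) →ₗ[MvS K ℓ] Derivation K (MvS K ℓ) (MvS K ℓ) :=
  Fintype.linearCombination (MvS K ℓ) pderiv

lemma toDerivation_apply (θ : Fin ℓ → MvS K ℓ) (f : MvS K ℓ) :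
    toDerivation θ f = ∑ i, θ i * pderiv i f := by
  rw [toDerivation, Fintype.linearCombination_apply, ← Derivation.coeFnAddMonoidHom_apply,
    map_sum, Finset.sum_apply]
  simp [Derivation.coeFnAddMonoidHom_apply]

lemma mem_derQ_iff {Q : MvS K ℓ} {θ : Fin ℓ → MvS K ℓ} :
    θ ∈ DerQ Q ↔ Q ∣ toDerivation θ Q := by
  rw [toDerivation_apply]; rfl

lemma toDerivation_linForm (θ : Fin ℓ → MvS K ℓ) (c : Fin ℓ → K) :
    toDerivation θ (linForm c) = ∑ i, θ i * C (c i) := by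
  simp [toDerivation_apply, linForm, pderiv_X, Pi.single_apply, mul_comm]

lemma toDerivation_C_mul (θ : Fin ℓ → MvS K ℓ) (a : K) (f : MvS K ℓ) :
    toDerivation θ (C a * f) = C a * toDerivation θ f := by
  simp [C_mul']

lemma linForm_dvd_toDerivation {A : Finset (Fin ℓ → K)} (hA : IsArrangement A)
    {θ : Fin ℓ → MvS K ℓ} (hθ : θ ∈ DerA A) {c : Fin ℓ → K} (hc : c ∈ A) :
    linForm c ∣ toDerivation θ (linForm c) := by
  classical
  set R := ∏ c' ∈ A.erase c, linForm c'
  have hQ : Qpoly A = linForm c * R := (Finset.mul_prod_erase A linForm hc).symm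
  have hprime := prime_linForm (hA.1 c hc)
  have hR : ¬ linForm c ∣ R := fun hdvd ↦ by
    obtain ⟨c', hc', hdvd'⟩ := hprime.exists_mem_finset_dvd hdvd
    obtain ⟨hcc', hc'A⟩ := Finset.mem_erase.mp hc'
    exact not_linForm_dvd (hA.1 c hc) (hA.1 c' hc'A)
      (fun he ↦ hcc' (hA.2 c' hc'A c hc he.symm)) hdvd'
  have hleib : toDerivation θ (Qpoly A)
      = linForm c * toDerivation θ R + R * toDerivation θ (linForm c) := by
    rw [hQ]; exact (toDerivation θ).leibniz (linForm c) R
  have hQθ : linForm c ∣ toDerivation θ (Qpoly A) :=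
    (Dvd.intro R hQ.symm).trans (mem_derQ_iff.mp hθ)
  rw [hleib, mul_comm R] at hQθ
  exact (hprime.dvd_or_dvd ((dvd_add_right (dvd_mul_right _ _)).mp hQθ)).resolve_right hR

end Derivation

section Projection

/-- Composition with `x ↦ x - ellf h x • v`. When `ellf h v = 1` this map is a projection onto
`H_h`, so `projSubst h v` models restriction of polynomials to `H_h` inside `S` itself. -/
noncomputable def projSubst (h v : Fin ℓ → K) : MvS K ℓ →ₐ[K] MvS K ℓ :=
  aeval fun i ↦ X i - C (v i) * linForm h

variable (h v : Fin ℓ → K)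

lemma projSubst_linForm (c : Fin ℓ → K) :
    projSubst h v (linForm c) = linForm (c - ellf c v • h) := by
  rw [linForm_sub, linForm_smul, ellf_apply, map_sum, Finset.sum_mul]
  simp [projSubst, linForm, mul_sub, Finset.sum_sub_distrib, mul_assoc]

lemma projSubst_linForm_self {h v : Fin ℓ → K} (hv : ellf h v = 1) :
    projSubst h v (linForm h) = 0 := by
  rw [projSubst_linForm, hv, one_smul, sub_self]
  simp [linForm]

lemma linForm_dvd_sub_projSubst (f : MvS K ℓ) : linForm h ∣ f - projSubst h v f := by
  set I := Ideal.span {linForm h}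
  have hcomp : (Ideal.Quotient.mkₐ K I).comp (projSubst h v) = Ideal.Quotient.mkₐ K I := by
    refine algHom_ext fun i ↦ ?_
    simp only [AlgHom.comp_apply, Ideal.Quotient.mkₐ_eq_mk, projSubst, aeval_X]
    exact Ideal.Quotient.eq.mpr (Ideal.mem_span_singleton.mpr ⟨-C (v i), by ring⟩)
  rw [← Ideal.mem_span_singleton, ← Ideal.Quotient.eq]
  exact (congrArg (· f) hcomp).symm

lemma projSubst_ne_zero {f : MvS K ℓ} (hf : ¬ linForm h ∣ f) : projSubst h v f ≠ 0 :=
  fun h0 ↦ hf (by simpa [h0] using linForm_dvd_sub_projSubst h v f)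

lemma isHomogeneous_projSubst {f : MvS K ℓ} {n : ℕ} (hf : f.IsHomogeneous n) :
    (projSubst h v f).IsHomogeneous n := by
  have := hf.aeval _ fun i ↦ (isHomogeneous_X K i).sub ((isHomogeneous_linForm h).C_mul (v i))
  rwa [one_mul] at this

end Projection

section Restriction

variable {A : Finset (Fin ℓ → K)} {h : Fin ℓ → K}

noncomputable def fiber (A : Finset (Fin ℓ → K)) (h : Fin ℓ → K)
    (X : Submodule K (Fin ℓ → K)) : Finset (Fin ℓ → K) :=
  open Classical in A.filter fun c ↦ hypl c ⊓ hypl h = X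

lemma mem_fiber {X : Submodule K (Fin ℓ → K)} {c : Fin ℓ → K} :
    c ∈ fiber A h X ↔ c ∈ A ∧ hypl c ⊓ hypl h = X := by
  classical
  simp [fiber]

lemma prod_fiber_dvd (hA : IsArrangement A) (hh : NotInArr A h) {θ : Fin ℓ → MvS K ℓ}
    (hθ : θ ∈ DerA A) (c' : Fin ℓ → K) :
    ∏ c ∈ fiber A h (hypl c' ⊓ hypl h), linForm c ∣
      linForm h * toDerivation θ (linForm c') - linForm c' * toDerivation θ (linForm h) := by
  refine Finset.prod_dvd_of_isRelPrime (fun c hc d hd hcd ↦ ?_) fun c hc ↦ ?_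
  · obtain ⟨hcA, -⟩ := mem_fiber.mp hc
    obtain ⟨hdA, -⟩ := mem_fiber.mp hd
    exact isRelPrime_linForm (hA.1 c hcA) (hA.1 d hdA) fun he ↦ hcd (hA.2 c hcA d hdA he)
  obtain ⟨hcA, hcX⟩ := mem_fiber.mp hc
  obtain ⟨a, b, hb, rfl⟩ := exists_eq_smul_add_smul_of_inf_eq (hA.1 _ hcA) (hh.2 _ hcA) hcX
  have hθc := linForm_dvd_toDerivation hA hθ hcA
  rw [linForm_add, linForm_smul, linForm_smul, map_add, toDerivation_C_mul,
    toDerivation_C_mul] at hθc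
  rw [linForm_add, linForm_smul, linForm_smul]
  have key : C b * (linForm h * toDerivation θ (linForm c') -
      linForm c' * toDerivation θ (linForm h)) =
      linForm h * (C a * toDerivation θ (linForm h) + C b * toDerivation θ (linForm c')) -
      (C a * linForm h + C b * linForm c') * toDerivation θ (linForm h) := by ring
  have : C a * linForm h + C b * linForm c' ∣ C b * (linForm h * toDerivation θ (linForm c') -
      linForm c' * toDerivation θ (linForm h)) :=
    key ▸ dvd_sub (hθc.mul_left _) (dvd_mul_right _ _)
  exact (IsUnit.dvd_mul_left (hb.isUnit.map C)).mp this

lemma pow_card_fiber_dvd_projSubst (hA : IsArrangement A) (hh : NotInArr A h)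
    {θ : Fin ℓ → MvS K ℓ} (hθ : θ ∈ DerA A) {c' : Fin ℓ → K} (hc' : c' ∈ A)
    {v : Fin ℓ → K} (hv : ellf h v = 1) :
    projSubst h v (linForm c') ^ ((fiber A h (hypl c' ⊓ hypl h)).card - 1) ∣
      projSubst h v (toDerivation θ (linForm h)) := by
  set σ := projSubst h v
  set F := fiber A h (hypl c' ⊓ hypl h)
  have hdvd_form : ∀ c ∈ F, σ (linForm c') ∣ σ (linForm c) := fun c hc ↦ by
    obtain ⟨hcA, hcX⟩ := mem_fiber.mp hc
    obtain ⟨a, b, -, rfl⟩ := exists_eq_smul_add_smul_of_inf_eq (hA.1 _ hcA) (hh.2 _ hcA) hcX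
    rw [linForm_add, linForm_smul, linForm_smul, map_add, map_mul, map_mul,
      projSubst_linForm_self hv, mul_zero, zero_add]
    exact dvd_mul_left _ _
  have hpow : σ (linForm c') ^ F.card ∣
      -(σ (linForm c') * σ (toDerivation θ (linForm h))) := by
    calc σ (linForm c') ^ F.card = ∏ _c ∈ F, σ (linForm c') := (Finset.prod_const _).symm
      _ ∣ ∏ c ∈ F, σ (linForm c) := Finset.prod_dvd_prod_of_dvd _ _ hdvd_form
      _ = σ (∏ c ∈ F, linForm c) := (map_prod σ _ _).symm
      _ ∣ σ (linForm h * toDerivation θ (linForm c') -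
          linForm c' * toDerivation θ (linForm h)) := map_dvd σ (prod_fiber_dvd hA hh hθ c')
      _ = -(σ (linForm c') * σ (toDerivation θ (linForm h))) := by
        rw [map_sub, map_mul, map_mul, projSubst_linForm_self hv, zero_mul, zero_sub]
  have hcard : F.card = (F.card - 1) + 1 :=
    (Nat.sub_add_cancel (Finset.card_pos.mpr ⟨c', mem_fiber.mpr ⟨hc', rfl⟩⟩)).symm
  have hσ0 : σ (linForm c') ≠ 0 :=
    projSubst_ne_zero h v (not_linForm_dvd hh.1 (hA.1 c' hc') (hh.2 c' hc').symm)
  rw [dvd_neg, hcard, pow_succ, mul_comm (σ (linForm c'))] at hpow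
  exact (mul_dvd_mul_iff_right hσ0).mp hpow

lemma isRelPrime_projSubst_linForm (hA : IsArrangement A) (hh : NotInArr A h) (v : Fin ℓ → K)
    {c c' : Fin ℓ → K} (hc : c ∈ A) (hc' : c' ∈ A) (hne : hypl c ⊓ hypl h ≠ hypl c' ⊓ hypl h) :
    IsRelPrime (projSubst h v (linForm c)) (projSubst h v (linForm c')) := by
  have hres : ∀ d ∈ A, d - ellf d v • h ≠ 0 ∧
      hypl (d - ellf d v • h) ⊓ hypl h = hypl d ⊓ hypl h := fun d hd ↦ by
    have hsub : d - ellf d v • h = (-ellf d v) • h + (1 : K) • d := by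
      rw [one_smul, neg_smul, neg_add_eq_sub]
    refine ⟨fun h0 ↦ hh.2 d hd ?_, hsub ▸ inf_hypl_add_smul h d _ one_ne_zero⟩
    have hd' : d = ellf d v • h := sub_eq_zero.mp h0
    have ht : ellf d v ≠ 0 := fun ht ↦ hA.1 d hd (by rw [hd', ht, zero_smul])
    rw [hd', hypl_smul ht]
  obtain ⟨hr0, hrX⟩ := hres c hc
  obtain ⟨hr0', hrX'⟩ := hres c' hc'
  rw [projSubst_linForm, projSubst_linForm]
  exact isRelPrime_linForm hr0 hr0' fun he ↦ hne (by rw [← hrX, ← hrX', he])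

theorem card_le_restrictCount_add (hA : IsArrangement A) (hh : NotInArr A h)
    {θ : Fin ℓ → MvS K ℓ} (hθ : θ ∈ DerA A) {e : ℕ} (he : IsHomog θ e)
    (hnd : ¬ linForm h ∣ toDerivation θ (linForm h)) :
    A.card ≤ restrictCount A h + e := by
  classical
  obtain ⟨v, hv⟩ := exists_ellf_eq_one hh.1
  set σ := projSubst h v
  set img := A.image fun c ↦ hypl c ⊓ hypl h
  have hu : (σ (toDerivation θ (linForm h))).IsHomogeneous e := by
    refine isHomogeneous_projSubst h v ?_
    rw [toDerivation_linForm]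
    exact IsHomogeneous.sum _ _ _ fun i _ ↦ by simpa using (he i).mul (isHomogeneous_C _ (h i))
  have hrep : ∀ X, ∃ c, X ∈ img → c ∈ A ∧ hypl c ⊓ hypl h = X := fun X ↦ by
    by_cases hX : X ∈ img
    · obtain ⟨c, hc, hcX⟩ := Finset.mem_image.mp hX
      exact ⟨c, fun _ ↦ ⟨hc, hcX⟩⟩
    · exact ⟨0, fun h' ↦ absurd h' hX⟩
  choose rep hrep using hrep
  have hprod : ∏ X ∈ img, σ (linForm (rep X)) ^ ((fiber A h X).card - 1) ∣
      σ (toDerivation θ (linForm h)) := by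
    refine Finset.prod_dvd_of_isRelPrime (fun X hX Y hY hXY ↦ ?_) fun X hX ↦ ?_
    · obtain ⟨hXA, hXX⟩ := hrep X hX
      obtain ⟨hYA, hYY⟩ := hrep Y hY
      exact (isRelPrime_projSubst_linForm hA hh v hXA hYA (by rwa [hXX, hYY])).pow
    · obtain ⟨hXA, hXX⟩ := hrep X hX
      simpa [hXX] using pow_card_fiber_dvd_projSubst hA hh hθ hXA hv
  have hdeg := (IsHomogeneous.prod _ _ _ fun X _ ↦ by
      simpa using (isHomogeneous_projSubst h v (isHomogeneous_linForm (rep X))).pow _).le_of_dvd_s3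
    hu (projSubst_ne_zero h v hnd) hprod
  have hcount : A.card = ∑ X ∈ img, ((fiber A h X).card - 1) + img.card :=
    Finset.card_eq_sum_card_fiberwise_sub_one_add_card_image _ A
  have hres : restrictCount A h = img.card := by unfold restrictCount; convert rfl
  omega

lemma exists_mem_not_linForm_dvd_toDerivation (hA : IsArrangement A)
    {G : Set (Fin ℓ → MvS K ℓ)} (hG : Generates A G) (hh : NotInArr A h) :
    ∃ θ ∈ G, ¬ linForm h ∣ toDerivation θ (linForm h) := by
  classical
  obtain ⟨j, hj⟩ := Function.ne_iff.mp hh.1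
  set θQ : Fin ℓ → MvS K ℓ := Pi.single j (Qpoly A)
  have hθQ : θQ ∈ DerA A := mem_derQ_iff.mpr <| by
    simp [θQ, toDerivation_apply, Pi.single_apply]
  have hθQh : toDerivation θQ (linForm h) = Qpoly A * C (h j) := by
    simp [θQ, toDerivation_linForm, Pi.single_apply]
  by_contra! hall
  have hspan : ∀ θ ∈ Submodule.span (MvS K ℓ) G, linForm h ∣ toDerivation θ (linForm h) := by
    intro θ hθ
    induction hθ using Submodule.span_induction with
    | mem θ hθ => exact hall θ hθ
    | zero => simp
    | add θ θ' _ _ hθ hθ' => simpa using dvd_add hθ hθ'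
    | smul s θ _ hθ => simpa using hθ.mul_left s
  have hdvd := hspan θQ (hG.2 θQ hθQ)
  rw [hθQh, (hj.isUnit.map C).dvd_mul_right] at hdvd
  obtain ⟨c, hc, hdvd'⟩ := (prime_linForm hh.1).exists_mem_finset_dvd hdvd
  exact not_linForm_dvd hh.1 (hA.1 c hc) (hh.2 c hc).symm hdvd'

end Restriction

end Arrangement

theorem stmt3_general {K : Type*} [Field K] {ℓ : ℕ}
    (A' : Finset (Fin ℓ → K)) (hA' : IsArrangement A')
    (G : Set (Fin ℓ → MvS K ℓ)) (hmin : IsMinGen A' G) (hhom : HomogGens G)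
    (d : ℕ) (hd : MaxDeg G d)
    (h : Fin ℓ → K) (hh : NotInArr A' h) :
    A'.card ≤ restrictCount A' h + d := by
  obtain ⟨θ, hθG, hθ⟩ := Arrangement.exists_mem_not_linForm_dvd_toDerivation hA' hmin.1 hh
  obtain ⟨-, e, he⟩ := hhom θ hθG
  calc A'.card ≤ restrictCount A' h + e :=
        Arrangement.card_le_restrictCount_add hA' hh (hmin.1.1 θ hθG) he hθ
    _ ≤ restrictCount A' h + d := Nat.add_le_add_left (hd.1 θ hθG e he) _

/-- for any hyperplane `H ∉ A'` we have `|(A' ∪ {H})^H| ≥ |A'| - d_{A'}`. -/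
theorem stmt3 {K : Type*} [Field K] [CharZero K] {ℓ : ℕ}
    (A' : Finset (Fin ℓ → K)) (hA' : IsArrangement A')
    (G : Set (Fin ℓ → MvS K ℓ)) (hmin : IsMinGen A' G) (hhom : HomogGens G)
    (d : ℕ) (hd : MaxDeg G d)
    (h : Fin ℓ → K) (hh : NotInArr A' h) :
    A'.card ≤ restrictCount A' h + d :=
  stmt3_general A' hA' G hmin hhom d hd h hh
end

section
/- Suppose A is a central arrangement in K^3 such that there exist two codimension-2 flats p_1, p_2 ∈ L(A)_2 with μ(p_1) + μ(p_2) = |A| − 2, and no plane of A contains both p_1 and p_2. Then the minimal restriction number t_A equals 2. -/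
open MvPolynomial

variable {K : Type*} [Field K] {ℓ : ℕ}

/-!
The plane `H = p₁ ⊔ p₂` does not belong to `A`, and by the counting hypothesis every plane of `A`
contains exactly one of the lines `p₁`, `p₂`; by the modular law it then meets `H` in exactly that
line, so `|(A ∪ {H})^H| = 2`. Conversely, any two planes of `K^3` meet in a nonzero subspace, so if
all planes of `A` met some plane `H'` in one line `L`, then `L` would lie in both `p₁` and `p₂`,
which meet only in `0`.
-/

lemma ellf_surjective : Function.Surjective (ellf : (Fin ℓ → K) → (Fin ℓ → K) →ₗ[K] K) := by
  intro f
  refine ⟨fun i => f fun j => if i = j then 1 else 0, LinearMap.ext fun x => ?_⟩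
  simp [ellf, f.pi_apply_eq_sum_univ x, mul_comm]

lemma le_finrank_hypl_add_one (c : Fin ℓ → K) : ℓ ≤ Module.finrank K (hypl c) + 1 := by
  have hrange : Module.finrank K (LinearMap.range (ellf c)) ≤ 1 := by
    simpa using Submodule.finrank_le (LinearMap.range (ellf c))
  have := LinearMap.finrank_range_add_finrank_ker (ellf c)
  rw [Module.finrank_fin_fun] at this
  rw [hypl]
  omega

lemma hypl_inf_hypl_ne_bot (hℓ : 3 ≤ ℓ) (c h : Fin ℓ → K) : hypl c ⊓ hypl h ≠ ⊥ := by
  intro hbot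
  have hsum := Submodule.finrank_sup_add_finrank_inf_eq (hypl c) (hypl h)
  have hsup : Module.finrank K ↥(hypl c ⊔ hypl h) ≤ ℓ := by
    simpa using Submodule.finrank_le (hypl c ⊔ hypl h)
  rw [hbot, finrank_bot] at hsum
  have := le_finrank_hypl_add_one c
  have := le_finrank_hypl_add_one h
  omega

lemma exists_ne_zero_hypl_eq {W : Submodule K (Fin ℓ → K)}
    (hW : Module.finrank K W + 1 = ℓ) : ∃ c ≠ 0, hypl c = W := by
  have hWtop : W < ⊤ := by
    refine lt_top_iff_ne_top.mpr fun h => ?_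
    rw [h, finrank_top, Module.finrank_fin_fun] at hW
    omega
  obtain ⟨f, hf0, hfW⟩ := Submodule.exists_dual_map_eq_bot_of_lt_top hWtop inferInstance
  obtain ⟨c, rfl⟩ := ellf_surjective f
  have hker : hypl c ≠ ⊤ := LinearMap.ker_eq_top.not.mpr hf0
  refine ⟨c, fun hc => hf0 (by simp [hc, ellf]), ?_⟩
  refine (Submodule.eq_of_le_of_finrank_le (LinearMap.le_ker_iff_map.mpr hfW) ?_).symm
  show Module.finrank K (hypl c) ≤ _
  have := Submodule.finrank_lt hker
  rw [Module.finrank_fin_fun] at this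
  omega

section Lattice

variable {α ι : Type*} [Lattice α] [OrderBot α]

lemma inf_sup_eq_left_of_isAtom [IsModularLattice α] {a b x : α} (hb : IsAtom b)
    (ha : a ≤ x) (hbx : ¬ b ≤ x) : x ⊓ (a ⊔ b) = a := by
  rw [inf_comm, sup_inf_assoc_of_le b ha, disjoint_iff.mp (hb.not_le_iff_disjoint.mp hbx),
    sup_bot_eq]

lemma card_image_inf_sup_le_two [IsModularLattice α] [DecidableEq α] {A : Finset ι} {g : ι → α}
    {a b : α} (ha : IsAtom a) (hb : IsAtom b)
    (hcover : ∀ i ∈ A, a ≤ g i ∨ b ≤ g i) (hsep : ∀ i ∈ A, a ≤ g i → ¬ b ≤ g i) :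
    (A.image fun i => g i ⊓ (a ⊔ b)).card ≤ 2 := by
  have hsub : (A.image fun i => g i ⊓ (a ⊔ b)) ⊆ {a, b} := by
    intro y hy
    obtain ⟨i, hi, rfl⟩ := Finset.mem_image.mp hy
    rcases hcover i hi with hai | hbi
    · simp [inf_sup_eq_left_of_isAtom hb hai (hsep i hi hai)]
    · simp [sup_comm a b, inf_sup_eq_left_of_isAtom ha hbi fun hai => hsep i hi hai hbi]
  exact (Finset.card_le_card hsub).trans Finset.card_le_two

lemma two_le_card_image_inf [DecidableEq α] {A : Finset ι} {g : ι → α} {y : α}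
    (hy : ∀ i ∈ A, g i ⊓ y ≠ ⊥) {i j k l : ι} (hi : i ∈ A) (hj : j ∈ A) (hk : k ∈ A)
    (hl : l ∈ A) (hdisj : Disjoint (g i ⊓ g j) (g k ⊓ g l)) :
    2 ≤ (A.image fun i => g i ⊓ y).card := by
  by_contra! hlt
  have hconst := Finset.card_le_one.mp (Nat.le_of_lt_succ hlt)
  have hle : ∀ m ∈ A, g i ⊓ y ≤ g m := fun m hm =>
    (hconst _ (Finset.mem_image_of_mem _ hi) _ (Finset.mem_image_of_mem _ hm)).le.trans
      inf_le_left
  exact hy i hi (le_bot_iff.mp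
    (hdisj (le_inf (hle i hi) (hle j hj)) (le_inf (hle k hk) (hle l hl))))

end Lattice

lemma forall_or_of_ncard_add_ncard_eq_card {ι : Type*} {A : Finset ι} {P Q : ι → Prop}
    (hcard : {c | c ∈ A ∧ P c}.ncard + {c | c ∈ A ∧ Q c}.ncard = A.card)
    (hPQ : ∀ c ∈ A, P c → ¬ Q c) : ∀ c ∈ A, P c ∨ Q c := by
  classical
  have hfilter (R : ι → Prop) [DecidablePred R] : {c | c ∈ A ∧ R c} = ↑(A.filter R) := by
    ext; simp
  rw [hfilter, hfilter, Set.ncard_coe_finset, Set.ncard_coe_finset,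
    ← Finset.card_filter_add_card_filter_not (s := A) P, add_right_inj] at hcard
  have hQ : A.filter Q = A.filter (¬ P ·) :=
    Finset.eq_of_subset_of_card_le
      (Finset.monotone_filter_right _ fun c hc hQc hPc => hPQ c hc hPc hQc) hcard.ge
  intro c hc
  by_cases hPc : P c
  · exact Or.inl hPc
  · have hcQ : c ∈ A.filter Q := hQ.symm ▸ Finset.mem_filter.mpr ⟨hc, hPc⟩
    exact Or.inr (Finset.mem_filter.mp hcQ).2

lemma tA_eq_of_le_of_forall_le {A : Finset (Fin ℓ → K)} {n : ℕ}
    (hle : ∃ h, NotInArr A h ∧ restrictCount A h ≤ n)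
    (hge : ∀ h, NotInArr A h → n ≤ restrictCount A h) : tA A = n := by
  obtain ⟨h, hh, hhn⟩ := hle
  have hmem : restrictCount A h ∈ {m | ∃ h, NotInArr A h ∧ m = restrictCount A h} :=
    ⟨h, hh, rfl⟩
  exact le_antisymm ((Nat.sInf_le hmem).trans hhn)
    (le_csInf ⟨_, hmem⟩ fun m ⟨h', hh', hm⟩ => hm ▸ hge h' hh')

theorem stmt5_general {K : Type*} [Field K]
    (A : Finset (Fin 3 → K))
    (p1 p2 : Submodule K (Fin 3 → K))
    (hp1 : ∃ c1 ∈ A, ∃ c2 ∈ A, c1 ≠ c2 ∧ p1 = hypl c1 ⊓ hypl c2 ∧ Module.finrank K p1 = 1)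
    (hp2 : ∃ c1 ∈ A, ∃ c2 ∈ A, c1 ≠ c2 ∧ p2 = hypl c1 ⊓ hypl c2 ∧ Module.finrank K p2 = 1)
    (hne : p1 ≠ p2)
    (hmu : {c : Fin 3 → K | c ∈ A ∧ p1 ≤ hypl c}.ncard
        + {c : Fin 3 → K | c ∈ A ∧ p2 ≤ hypl c}.ncard = A.card)
    (hline : ¬ ∃ c ∈ A, p1 ≤ hypl c ∧ p2 ≤ hypl c) :
    tA A = 2 := by
  obtain ⟨c1, hc1, c2, hc2, -, hp1eq, hp1⟩ := hp1
  obtain ⟨d1, hd1, d2, hd2, -, hp2eq, hp2⟩ := hp2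
  have hatom1 := Submodule.isAtom_iff_finrank_eq_one.mpr hp1
  have hatom2 := Submodule.isAtom_iff_finrank_eq_one.mpr hp2
  have hdisj : Disjoint p1 p2 := hatom1.disjoint_of_ne hatom2 hne
  have hsep : ∀ c ∈ A, p1 ≤ hypl c → ¬ p2 ≤ hypl c := fun c hc h1 h2 => hline ⟨c, hc, h1, h2⟩
  have hsup : Module.finrank K ↥(p1 ⊔ p2) + 1 = 3 := by
    have := Submodule.finrank_sup_add_finrank_inf_eq p1 p2
    rw [disjoint_iff.mp hdisj, finrank_bot, hp1, hp2] at this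
    omega
  obtain ⟨h, hh0, hh⟩ := exists_ne_zero_hypl_eq hsup
  refine tA_eq_of_le_of_forall_le ⟨h, ⟨hh0, fun c hc hch => ?_⟩, ?_⟩ fun h' _ => ?_
  · exact hsep c hc (hch ▸ hh ▸ le_sup_left) (hch ▸ hh ▸ le_sup_right)
  · rw [restrictCount, hh]
    exact card_image_inf_sup_le_two hatom1 hatom2
      (forall_or_of_ncard_add_ncard_eq_card hmu hsep) hsep
  · rw [restrictCount]
    exact two_le_card_image_inf (fun c _ => hypl_inf_hypl_ne_bot le_rfl c h') hc1 hc2 hd1 hd2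
      (hp1eq ▸ hp2eq ▸ hdisj)

/-- if two codimension-2 flats `p₁ ≠ p₂` of `A ⊂ K^3` satisfy
`μ(p₁) + μ(p₂) = |A| - 2` and no plane of `A` contains both, then `t_A = 2`. -/
theorem stmt5 {K : Type*} [Field K] [CharZero K]
    (A : Finset (Fin 3 → K)) (hA : IsArrangement A)
    (p1 p2 : Submodule K (Fin 3 → K))
    (hp1 : ∃ c1 ∈ A, ∃ c2 ∈ A, c1 ≠ c2 ∧ p1 = hypl c1 ⊓ hypl c2 ∧ Module.finrank K p1 = 1)
    (hp2 : ∃ c1 ∈ A, ∃ c2 ∈ A, c1 ≠ c2 ∧ p2 = hypl c1 ⊓ hypl c2 ∧ Module.finrank K p2 = 1)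
    (hne : p1 ≠ p2)
    (hmu : {c : Fin 3 → K | c ∈ A ∧ p1 ≤ hypl c}.ncard
        + {c : Fin 3 → K | c ∈ A ∧ p2 ≤ hypl c}.ncard = A.card)
    (hline : ¬ ∃ c ∈ A, p1 ≤ hypl c ∧ p2 ≤ hypl c) :
    tA A = 2 :=
  stmt5_general A p1 p2 hp1 hp2 hne hmu hline
end

section
/- Let B_n be the arrangement in K^3 defined by Q = x·z·(y−z)·∏_{k=1}^n (x+ky). Then D(B_n) is generated by the four derivations θ_E (Euler derivation), z(y−z)∂_z, x∏_{k=1}^n(x+ky)∂_x, and (y−z)∏_{k=1}^n(x+ky)∂_y. -/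
open MvPolynomial

variable {K : Type*} [Field K] {ℓ : ℕ}

/-! A derivation `θ` satisfies `θ(Q) ∈ QS` iff `θ(α) ∈ αS` for every linear factor `α` of `Q`,
since these factors are pairwise non-associated primes. For `Q = xz(y-z)∏(x+ky)` this says
`x ∣ θ_x`, `z ∣ θ_z`, `y - z ∣ θ_y - θ_z` and `x + ky ∣ θ_x + kθ_y`. Write `θ_x = xf`; then
`θ - fθ_E` has `x`-coefficient `0`, so its `y`-coefficient is divisible by every `x + ky` (as
`k ≠ 0` in characteristic zero), hence by `P = ∏(x+ky)`: `θ - fθ_E = (0, PG, zh)` with `y - z ∣ PG - zh`.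
Substituting `z ↦ y` gives `P·G(x,y,y) = y·h(x,y,y)`, so `G(x,y,y) = yu` and `h(x,y,y) = uP`, i.e.
`G ≡ yu` and `h ≡ uP` modulo `y - z`, and these congruences are exactly the coefficients of `θ`
in the four generators. -/

namespace MvPolynomial

variable {R σ : Type*} [CommRing R]

theorem not_dvd_of_eval_eq_zero {a b : MvPolynomial σ R} (x : σ → R) (ha : eval x a = 0)
    (hb : eval x b ≠ 0) : ¬ a ∣ b := fun h =>
  hb (zero_dvd_iff.mp (ha ▸ map_dvd (eval x) h))

theorem isRelPrime_of_eval_eq_zero [IsDomain R] {a b : MvPolynomial σ R} (ha : Prime a)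
    (x : σ → R) (hax : eval x a = 0) (hbx : eval x b ≠ 0) : IsRelPrime a b :=
  ha.irreducible.isRelPrime_iff_not_dvd.mpr (not_dvd_of_eval_eq_zero x hax hbx)

variable [DecidableEq σ]

theorem aeval_update_of_notMem_vars {j : σ} {f : MvPolynomial σ R} (hf : j ∉ f.vars)
    (g : MvPolynomial σ R) : aeval (Function.update X j g) f = f :=
  (eval₂Hom_congr' rfl (fun _ hi _ => Function.update_of_ne (ne_of_mem_of_not_mem hi hf) _ _)
    rfl).trans (aeval_X_left_apply f)

theorem X_sub_dvd_sub_aeval_update (j : σ) (g f : MvPolynomial σ R) :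
    X j - g ∣ f - aeval (Function.update X j g) f := by
  induction f using MvPolynomial.induction_on with
  | C a => simp
  | add p q hp hq => simpa only [map_add, add_sub_add_comm] using dvd_add hp hq
  | mul_X p k hp =>
    have hXk : X j - g ∣ X k - Function.update X j g k := by
      rcases eq_or_ne k j with rfl | hkj
      · simp
      · simp [hkj]
    have h : p * X k - aeval (Function.update X j g) (p * X k)
        = (p - aeval (Function.update X j g) p) * X k
          + aeval (Function.update X j g) p * (X k - Function.update X j g k) := by
      rw [map_mul, aeval_X]; ring
    rw [h]
    exact dvd_add (hp.mul_right _) (hXk.mul_left _)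

theorem X_sub_dvd_iff {j : σ} {g : MvPolynomial σ R} (hg : j ∉ g.vars) (f : MvPolynomial σ R) :
    X j - g ∣ f ↔ aeval (Function.update X j g) f = 0 := by
  constructor
  · rintro ⟨c, rfl⟩
    rw [map_mul, map_sub, aeval_X, Function.update_self, aeval_update_of_notMem_vars hg,
      sub_self, zero_mul]
  · intro h
    simpa only [h, sub_zero] using X_sub_dvd_sub_aeval_update j g f

theorem prime_X_sub [IsDomain R] {j : σ} {g : MvPolynomial σ R} (hg : j ∉ g.vars) :
    Prime (X j - g) := by
  have hne : X j - g ≠ 0 := fun h => hg (by simp [← sub_eq_zero.mp h, vars_X])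
  have hker : Ideal.span {X j - g} = RingHom.ker (aeval (R := R) (Function.update X j g)) := by
    ext f
    rw [Ideal.mem_span_singleton, RingHom.mem_ker, X_sub_dvd_iff hg]
  exact (Ideal.span_singleton_prime hne).mp (hker ▸ RingHom.ker_isPrime _)

theorem prime_X_sub_X [IsDomain R] {i j : σ} (hij : i ≠ j) :
    Prime (X i - X j : MvPolynomial σ R) :=
  prime_X_sub (by simp [vars_X, hij])

theorem prime_X_add_C_mul_X [IsDomain R] {i j : σ} (hij : i ≠ j) (c : R) :
    Prime (X i + C c * X j : MvPolynomial σ R) := by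
  have hvars : i ∉ (-(C c * X j) : MvPolynomial σ R).vars := fun hi => by
    have := vars_mul (C c) (X j) (vars_neg (C c * X j) ▸ hi)
    simp [vars_X, hij] at this
  simpa using prime_X_sub hvars

theorem mkDerivation_apply_eq_sum [Fintype σ] (θ : σ → MvPolynomial σ R) (f : MvPolynomial σ R) :
    mkDerivation R θ f = ∑ i, θ i * pderiv i f := by
  have hsum : ∀ g, (∑ i, θ i • pderiv i : Derivation R (MvPolynomial σ R) (MvPolynomial σ R)) g
      = ∑ i, θ i * pderiv i g := fun g => by
    rw [← Derivation.coeFnAddMonoidHom_apply, map_sum, Finset.sum_apply]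
    rfl
  have h : mkDerivation R θ = ∑ i, θ i • pderiv i := derivation_ext fun k => by
    simp [hsum, pderiv_X, Pi.single_apply]
  rw [h, hsum]

/-- The substitution `τ : x_j ↦ x_i` is reduction modulo `x_i - x_j`: solve `P·τG = x_i·τH` in
the image of `τ`, which `τ` fixes, and lift the solution back. -/
theorem exists_eq_of_X_sub_X_dvd [IsDomain R] {i j : σ} (hij : i ≠ j)
    {P G H : MvPolynomial σ R} (hP : j ∉ P.vars) (hXP : ¬ X i ∣ P)
    (h : X i - X j ∣ P * G - X j * H) :
    ∃ u v b, G = X i * u + (X i - X j) * v ∧ H = u * P + (X i - X j) * b := by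
  set τ : MvPolynomial σ R →ₐ[R] MvPolynomial σ R := aeval (Function.update X j (X i))
  have hdvd (f : MvPolynomial σ R) : X i - X j ∣ f ↔ τ f = 0 := by
    rw [← neg_sub, neg_dvd]
    exact X_sub_dvd_iff (by simp [vars_X, hij.symm]) f
  have hτXi : τ (X i) = X i := by simp [τ, Function.update_of_ne hij]
  have hτXj : τ (X j) = X i := by simp [τ]
  have hτP : τ P = P := aeval_update_of_notMem_vars hP _
  have hττ (w : MvPolynomial σ R) : τ (τ w) = τ w := by
    refine AlgHom.congr_fun (φ₁ := τ.comp τ) (algHom_ext fun k => ?_) w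
    rcases eq_or_ne k j with rfl | hkj
    · simp [hτXi, hτXj]
    · simp [τ, hkj]
  have hsubst : P * τ G = X i * τ H := by
    have := (hdvd _).mp h
    rw [map_sub, map_mul, map_mul, hτP, hτXj] at this
    exact sub_eq_zero.mp this
  obtain ⟨u₀, hu₀⟩ :=
    ((X_prime (R := R) (i := i)).dvd_or_dvd (hsubst.symm ▸ dvd_mul_right _ _)).resolve_left hXP
  have hG : τ G = X i * τ u₀ := by rw [← hττ G, hu₀, map_mul, hτXi]
  obtain ⟨v, hv⟩ := (hdvd (G - X i * τ u₀)).mpr (by rw [map_sub, map_mul, hG, hτXi, hττ, sub_self])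
  have hH : τ H = τ u₀ * P := mul_left_cancel₀ (X_ne_zero i) (by rw [← hsubst, hG]; ring)
  obtain ⟨b, hb⟩ := (hdvd (H - τ u₀ * P)).mpr (by rw [map_sub, map_mul, hH, hττ, hτP, sub_self])
  exact ⟨τ u₀, v, b, by linear_combination hv, by linear_combination hb⟩

end MvPolynomial

namespace Derivation

variable {R A : Type*} [CommSemiring R] [CommRing A] [Algebra R A] (D : Derivation R A A)

theorem mul_dvd_apply_mul {a b : A} (ha : a ∣ D a) (hb : b ∣ D b) : a * b ∣ D (a * b) := by
  rw [D.leibniz, smul_eq_mul, smul_eq_mul]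
  exact dvd_add (mul_dvd_mul_left a hb) (mul_comm a b ▸ mul_dvd_mul_left b ha)

variable [DecompositionMonoid A]

theorem mul_dvd_apply_mul_iff {a b : A} (h : IsRelPrime a b) :
    a * b ∣ D (a * b) ↔ a ∣ D a ∧ b ∣ D b := by
  refine ⟨fun hab => ?_, fun ⟨ha, hb⟩ => D.mul_dvd_apply_mul ha hb⟩
  rw [D.leibniz, smul_eq_mul, smul_eq_mul] at hab
  exact ⟨h.dvd_of_dvd_mul_left ((dvd_add_right (dvd_mul_right a _)).mp
      ((dvd_mul_right a b).trans hab)),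
    h.symm.dvd_of_dvd_mul_left ((dvd_add_left (dvd_mul_right b _)).mp
      ((dvd_mul_left b a).trans hab))⟩

theorem prod_dvd_apply_prod_iff {ι : Type*} {s : Finset ι} {f : ι → A}
    (hs : (s : Set ι).Pairwise (Function.onFun IsRelPrime f)) :
    (∏ i ∈ s, f i) ∣ D (∏ i ∈ s, f i) ↔ ∀ i ∈ s, f i ∣ D (f i) := by
  classical
  induction s using Finset.induction_on with
  | empty => simp
  | @insert a s ha ih =>
    rw [Finset.coe_insert, Set.pairwise_insert] at hs
    have hcop : IsRelPrime (f a) (∏ i ∈ s, f i) :=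
      IsRelPrime.prod_right fun i hi => (hs.2 i hi (ne_of_mem_of_not_mem hi ha).symm).1
    rw [Finset.prod_insert ha, D.mul_dvd_apply_mul_iff hcop, ih hs.1, Finset.forall_mem_insert]

end Derivation

section ArrangementB

variable (n : ℕ)

noncomputable def pencilProd (K : Type*) [Field K] (n : ℕ) : MvS K 3 :=
  ∏ k ∈ Finset.Icc 1 n, (X 0 + C (k : K) * X 1)

noncomputable def bnPoly (K : Type*) [Field K] (n : ℕ) : MvS K 3 :=
  X 0 * X 2 * (X 1 - X 2) * pencilProd K n

noncomputable def bnGens (K : Type*) [Field K] (n : ℕ) : Set (Fin 3 → MvS K 3) :=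
  {eulerDer K 3, ![0, 0, X 2 * (X 1 - X 2)], ![X 0 * pencilProd K n, 0, 0],
    ![0, (X 1 - X 2) * pencilProd K n, 0]}

theorem pairwise_isRelPrime_pencil [CharZero K] :
    ((Finset.Icc 1 n : Finset ℕ) : Set ℕ).Pairwise
      (Function.onFun IsRelPrime fun k => (X 0 + C (k : K) * X 1 : MvS K 3)) := by
  intro k _ j _ hkj
  refine isRelPrime_of_eval_eq_zero (prime_X_add_C_mul_X (by decide) _) ![-(k : K), 1, 0]
    (by simp) ?_
  simpa [neg_add_eq_sub, sub_eq_zero] using (Nat.cast_injective (R := K)).ne hkj.symm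

theorem two_notMem_vars_pencilProd : 2 ∉ (pencilProd K n).vars := fun h => by
  obtain ⟨k, -, hk⟩ := Finset.mem_biUnion.mp (vars_prod _ h)
  rcases Finset.mem_union.mp (vars_add_subset _ _ hk) with h0 | h1
  · simp [vars_X] at h0
  · have := vars_mul _ _ h1
    rw [vars_C, vars_X] at this
    simp at this

theorem not_X_one_dvd_pencilProd : ¬ (X 1 : MvS K 3) ∣ pencilProd K n :=
  not_dvd_of_eval_eq_zero ![1, 0, 0] (by simp) (by simp [pencilProd])

theorem mem_DerQ_bnPoly_iff [CharZero K] {θ : Fin 3 → MvS K 3} :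
    θ ∈ DerQ (bnPoly K n) ↔ X 0 ∣ θ 0 ∧ X 2 ∣ θ 2 ∧ X 1 - X 2 ∣ θ 1 - θ 2 ∧
      ∀ k ∈ Finset.Icc 1 n, X 0 + C (k : K) * X 1 ∣ θ 0 + C (k : K) * θ 1 := by
  have h02 : IsRelPrime (X 0 : MvS K 3) (X 2) :=
    isRelPrime_of_eval_eq_zero X_prime ![0, 0, 1] (by simp) (by simp)
  have h12 : IsRelPrime (X 0 * X 2 : MvS K 3) (X 1 - X 2) :=
    (isRelPrime_of_eval_eq_zero (prime_X_sub_X (by decide)) ![1, 1, 1] (by simp) (by simp)).symm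
  have hP : IsRelPrime (X 0 * X 2 * (X 1 - X 2) : MvS K 3) (pencilProd K n) := by
    refine IsRelPrime.prod_right fun k hk => (isRelPrime_of_eval_eq_zero
      (prime_X_add_C_mul_X (by decide) _) ![-(k : K), 1, 2] (by simp) ?_).symm
    have : (k : K) ≠ 0 := Nat.cast_ne_zero.mpr (by grind)
    simp [this, show (1 : K) - 2 ≠ 0 by norm_num]
  simp only [DerQ, bnPoly, Set.mem_ofPred_eq, ← mkDerivation_apply_eq_sum]
  rw [Derivation.mul_dvd_apply_mul_iff _ hP, Derivation.mul_dvd_apply_mul_iff _ h12,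
    Derivation.mul_dvd_apply_mul_iff _ h02, pencilProd,
    Derivation.prod_dvd_apply_prod_iff _ (pairwise_isRelPrime_pencil n)]
  simp [mkDerivation_X, and_assoc]

theorem bnGens_subset_DerQ [CharZero K] : bnGens K n ⊆ DerQ (bnPoly K n) := by
  have hdvdP (k : ℕ) (hk : k ∈ Finset.Icc 1 n) :
      X 0 + (k : MvS K 3) * X 1 ∣ pencilProd K n := by
    simpa [pencilProd] using Finset.dvd_prod_of_mem (fun k : ℕ => X 0 + C (k : K) * X 1) hk
  rintro θ (rfl | rfl | rfl | rfl) <;>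
    refine (mem_DerQ_bnPoly_iff n).mpr ⟨?_, ?_, ?_, fun k hk => ?_⟩ <;>
    simp [eulerDer]
  · exact (hdvdP k hk).mul_left _
  · exact ((hdvdP k hk).mul_left _).mul_left _

theorem DerQ_bnPoly_subset_span [CharZero K] :
    DerQ (bnPoly K n) ⊆ Submodule.span (MvS K 3) (bnGens K n) := by
  intro φ hφ
  obtain ⟨⟨f, hf⟩, ⟨h, hh⟩, h12, hk⟩ := (mem_DerQ_bnPoly_iff n).mp hφ
  obtain ⟨G, hG⟩ : pencilProd K n ∣ φ 1 - X 1 * f := by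
    refine Finset.prod_dvd_of_isRelPrime (pairwise_isRelPrime_pencil n) fun k hk' => ?_
    have hk0 : (k : K) ≠ 0 := Nat.cast_ne_zero.mpr (by grind)
    have hkdvd : X 0 + C (k : K) * X 1 ∣ C (k : K) * (φ 1 - X 1 * f) := by
      have e : C (k : K) * (φ 1 - X 1 * f)
          = (φ 0 + C (k : K) * φ 1) - f * (X 0 + C (k : K) * X 1) := by
        rw [hf]; ring
      rw [e]
      exact dvd_sub (hk k hk') (dvd_mul_left _ _)
    exact (hk0.isUnit.map C).dvd_mul_left.mp hkdvd
  obtain ⟨u, v, b, hGu, hhu⟩ := exists_eq_of_X_sub_X_dvd (i := 1) (j := 2) (by decide)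
    (two_notMem_vars_pencilProd n) (not_X_one_dvd_pencilProd n) (G := G) (H := h - f) (by
      have e : pencilProd K n * G - X 2 * (h - f) = (φ 1 - φ 2) - (X 1 - X 2) * f := by
        rw [hh]; linear_combination -hG
      rw [e]
      exact dvd_sub h12 (dvd_mul_right _ _))
  have hφ : φ = (f + u * pencilProd K n) • eulerDer K 3 + b • ![0, 0, X 2 * (X 1 - X 2)]
      + (-u) • ![X 0 * pencilProd K n, 0, 0] + v • ![0, (X 1 - X 2) * pencilProd K n, 0] := by
    funext i
    fin_cases i <;>
      simp only [Fin.zero_eta, Fin.mk_one, Fin.reduceFinMk, Pi.add_apply, Pi.smul_apply,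
        smul_eq_mul, eulerDer, Matrix.cons_val_zero, Matrix.cons_val_one, Matrix.cons_val,
        mul_zero, add_zero]
    · linear_combination hf
    · linear_combination hG + pencilProd K n * hGu
    · linear_combination hh + X 2 * hhu
  rw [hφ]
  refine add_mem (add_mem (add_mem ?_ ?_) ?_) ?_ <;>
    exact Submodule.smul_mem _ _ (Submodule.subset_span (by simp [bnGens]))

end ArrangementB

theorem stmt7_general {K : Type*} [Field K] [CharZero K] (n : ℕ) :
    let P : MvS K 3 := ∏ k ∈ Finset.Icc 1 n, (X 0 + C (k : K) * X 1)
    let Q : MvS K 3 := X 0 * X 2 * (X 1 - X 2) * P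
    eulerDer K 3 ∈ DerQ Q ∧
    (![0, 0, X 2 * (X 1 - X 2)] : Fin 3 → MvS K 3) ∈ DerQ Q ∧
    (![X 0 * P, 0, 0] : Fin 3 → MvS K 3) ∈ DerQ Q ∧
    (![0, (X 1 - X 2) * P, 0] : Fin 3 → MvS K 3) ∈ DerQ Q ∧
    ∀ φ ∈ DerQ Q, φ ∈ Submodule.span (MvS K 3)
      ({eulerDer K 3, ![0, 0, X 2 * (X 1 - X 2)], ![X 0 * P, 0, 0],
        ![0, (X 1 - X 2) * P, 0]} : Set (Fin 3 → MvS K 3)) := by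
  intro P Q
  have hgens : ∀ θ ∈ bnGens K n, θ ∈ DerQ Q := bnGens_subset_DerQ n
  exact ⟨hgens _ (.inl rfl), hgens _ (.inr (.inl rfl)), hgens _ (.inr (.inr (.inl rfl))),
    hgens _ (.inr (.inr (.inr rfl))), fun φ hφ => DerQ_bnPoly_subset_span n hφ⟩

/-- `D(B_n)` for `Q = xz(y-z)∏_{k=1}^n (x+ky)` is generated by `θ_E`,
`z(y-z)∂_z`, `x∏(x+ky)∂_x` and `(y-z)∏(x+ky)∂_y`. -/
theorem stmt7 {K : Type*} [Field K] [CharZero K] (n : ℕ) (hn : 1 ≤ n) :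
    let P : MvS K 3 := ∏ k ∈ Finset.Icc 1 n, (X 0 + C (k : K) * X 1)
    let Q : MvS K 3 := X 0 * X 2 * (X 1 - X 2) * P
    eulerDer K 3 ∈ DerQ Q ∧
    (![0, 0, X 2 * (X 1 - X 2)] : Fin 3 → MvS K 3) ∈ DerQ Q ∧
    (![X 0 * P, 0, 0] : Fin 3 → MvS K 3) ∈ DerQ Q ∧
    (![0, (X 1 - X 2) * P, 0] : Fin 3 → MvS K 3) ∈ DerQ Q ∧
    ∀ φ ∈ DerQ Q, φ ∈ Submodule.span (MvS K 3)
      ({eulerDer K 3, ![0, 0, X 2 * (X 1 - X 2)], ![X 0 * P, 0, 0],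
        ![0, (X 1 - X 2) * P, 0]} : Set (Fin 3 → MvS K 3)) :=
  stmt7_general n
end

section
/- Let G be a simple graph such that adding some edge to G creates at least one new triangle, and let Tri(G) be the maximal number of new triangles created by adding a single edge. Then the maximal degree d_{A_G} among a minimal generating set of D(A_G) satisfies d_{A_G} ≥ Tri(G). -/
open MvPolynomial

variable {K : Type*} [Field K] {ℓ : ℕ}

/-! ### Auxiliary lemmas for Statement 13 -/

section Aux13

variable {K : Type*} [Field K] {ℓ : ℕ}

attribute [local instance] Classical.decEq

lemma aux_pderiv_prod {ι : Type*} [DecidableEq ι] (s : Finset ι) (f : ι → MvS K ℓ)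
    (i : Fin ℓ) :
    pderiv i (∏ c ∈ s, f c) = ∑ c ∈ s, pderiv i (f c) * ∏ c' ∈ s.erase c, f c' := by
  induction s using Finset.induction_on with
  | empty => simp
  | @insert a s ha ih =>
    rw [Finset.prod_insert ha, pderiv_mul, ih, Finset.sum_insert ha, Finset.erase_insert ha,
      Finset.mul_sum]
    congr 1
    apply Finset.sum_congr rfl
    intro c hc
    rw [Finset.erase_insert_of_ne (fun h : a = c => ha (by rw [h]; exact hc)),
      Finset.prod_insert (fun h => ha (Finset.mem_of_mem_erase h))]
    ring

lemma aux_pderiv_linForm (c : Fin ℓ → K) (i : Fin ℓ) :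
    pderiv i (linForm c : MvS K ℓ) = C (c i) := by
  unfold linForm
  rw [map_sum]
  have h : ∀ t : Fin ℓ, pderiv i (C (c t) * X t : MvS K ℓ)
      = if t = i then C (c t) else 0 := by
    intro t
    rw [pderiv_C_mul]
    by_cases h : t = i
    · subst h; rw [pderiv_X_self, mul_one, if_pos rfl]
    · rw [pderiv_X_of_ne h, mul_zero, if_neg h]
  rw [Finset.sum_congr rfl (fun t _ => h t), Finset.sum_ite_eq' Finset.univ i,
    if_pos (Finset.mem_univ i)]

lemma aux_sum_pderiv_Q (A : Finset (Fin ℓ → K)) (θ : Fin ℓ → MvS K ℓ) :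
    ∑ i, θ i * pderiv i (Qpoly A)
      = ∑ c ∈ A, (∏ c' ∈ A.erase c, linForm c') * ∑ i, θ i * C (c i) := by
  classical
  unfold Qpoly
  simp only [aux_pderiv_prod, aux_pderiv_linForm, Finset.mul_sum]
  rw [Finset.sum_comm]
  apply Finset.sum_congr rfl
  intro c _
  apply Finset.sum_congr rfl
  intro i _
  ring

lemma aux_mem_DerA (A : Finset (Fin ℓ → K)) (θ : Fin ℓ → MvS K ℓ)
    (h : ∀ c ∈ A, (linForm c : MvS K ℓ) ∣ ∑ i, θ i * C (c i)) :
    θ ∈ DerA A := by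
  classical
  show Qpoly A ∣ _
  rw [aux_sum_pderiv_Q]
  apply Finset.dvd_sum
  intro c hc
  obtain ⟨g, hg⟩ := h c hc
  rw [hg, ← mul_assoc, mul_comm (∏ c' ∈ A.erase c, linForm c') (linForm c),
    Finset.mul_prod_erase _ _ hc]
  exact Dvd.intro g rfl

lemma aux_forms_dvd (A : Finset (Fin ℓ → K)) (θ : Fin ℓ → MvS K ℓ)
    (hθ : θ ∈ DerA A)
    (hp : ∀ c ∈ A, Prime (linForm c : MvS K ℓ))
    (hnd : ∀ c ∈ A, ∀ c' ∈ A, c ≠ c' → ¬ (linForm c : MvS K ℓ) ∣ linForm c') :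
    ∀ c ∈ A, (linForm c : MvS K ℓ) ∣ ∑ i, θ i * C (c i) := by
  classical
  intro c hc
  have hQ : (linForm c : MvS K ℓ) ∣ Qpoly A := Finset.dvd_prod_of_mem _ hc
  have h1 : (linForm c : MvS K ℓ)
      ∣ ∑ c' ∈ A, (∏ c'' ∈ A.erase c', linForm c'') * ∑ i, θ i * C (c' i) := by
    rw [← aux_sum_pderiv_Q]
    exact hQ.trans hθ
  rw [← Finset.add_sum_erase _ _ hc] at h1
  have h2 : (linForm c : MvS K ℓ)
      ∣ ∑ c' ∈ A.erase c, (∏ c'' ∈ A.erase c', linForm c'') * ∑ i, θ i * C (c' i) := by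
    apply Finset.dvd_sum
    intro c' hc'
    exact (Finset.dvd_prod_of_mem _
      (Finset.mem_erase.2 ⟨Ne.symm (Finset.mem_erase.1 hc').1, hc⟩)).mul_right _
  have h3 : (linForm c : MvS K ℓ)
      ∣ (∏ c'' ∈ A.erase c, linForm c'') * ∑ i, θ i * C (c i) :=
    (dvd_add_right h2).1 (by rwa [add_comm] at h1)
  have hnotdvd : ¬ (linForm c : MvS K ℓ) ∣ ∏ c'' ∈ A.erase c, linForm c'' := by
    intro hdd
    obtain ⟨c', hc', hdvd⟩ := ((hp c hc).dvd_finset_prod_iff _).1 hdd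
    exact hnd c hc c' (Finset.mem_of_mem_erase hc')
      (Ne.symm (Finset.mem_erase.1 hc').1) hdvd
  rcases (hp c hc).2.2 _ _ h3 with h | h
  · exact absurd h hnotdvd
  · exact h

lemma aux_dvd_sub_rename (i j : Fin ℓ) (hij : i ≠ j) (p : MvS K ℓ) :
    (X i - X j : MvS K ℓ) ∣ (p - rename (fun t => if t = i then j else t) p) := by
  induction p using MvPolynomial.induction_on with
  | C a =>
    rw [rename_C, sub_self]
    exact dvd_zero _
  | add p q hp hq =>
    rw [map_add]
    convert dvd_add hp hq using 1
    ring
  | mul_X p t hp =>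
    rw [map_mul, rename_X]
    have h2 : (X i - X j : MvS K ℓ) ∣ (X t - X (if t = i then j else t)) := by
      by_cases h : t = i
      · subst h
        rw [if_pos rfl]
      · rw [if_neg h, sub_self]
        exact dvd_zero _
    have := dvd_add (hp.mul_right (X t))
      (h2.mul_left (rename (fun t => if t = i then j else t) p))
    convert this using 1
    ring

lemma aux_prime_X_sub_X (i j : Fin ℓ) (hij : i ≠ j) :
    Prime (X i - X j : MvS K ℓ) := by
  have hr0 : rename (fun t => if t = i then j else t) (X i - X j : MvS K ℓ) = 0 := by
    rw [map_sub, rename_X, rename_X, if_pos rfl, if_neg (Ne.symm hij), sub_self]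
  have hchar : ∀ p : MvS K ℓ,
      (X i - X j : MvS K ℓ) ∣ p ↔ rename (fun t => if t = i then j else t) p = 0 := by
    intro p
    constructor
    · rintro ⟨q, rfl⟩
      rw [map_mul, hr0, zero_mul]
    · intro h
      have := aux_dvd_sub_rename i j hij p
      rwa [h, sub_zero] at this
  refine ⟨?_, ?_, ?_⟩
  · intro h0
    have := congrArg (eval (fun t => if t = i then (1 : K) else 0)) h0
    simp [Ne.symm hij] at this
  · intro hu
    have := hu.map (rename (R := K) (fun t => if t = i then j else t))
    rw [hr0] at this
    exact not_isUnit_zero this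
  · intro a b hab
    rw [hchar] at hab
    rw [map_mul] at hab
    rcases mul_eq_zero.1 hab with h | h
    · exact Or.inl ((hchar a).2 h)
    · exact Or.inr ((hchar b).2 h)

lemma aux_not_dvd_X_sub (i j i' j' : Fin ℓ) (h1 : i' ≠ j')
    (h2 : (i' ≠ i ∧ i' ≠ j) ∨ (j' ≠ i ∧ j' ≠ j)) :
    ¬ (X i - X j : MvS K ℓ) ∣ (X i' - X j') := by
  rintro ⟨q, hq⟩
  rcases h2 with ⟨ha, hb⟩ | ⟨ha, hb⟩
  · have := congrArg (eval (fun t => if t = i' then (1 : K) else 0)) hq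
    simp [Ne.symm h1, Ne.symm ha, Ne.symm hb] at this
  · have := congrArg (eval (fun t => if t = j' then (1 : K) else 0)) hq
    simp [h1, Ne.symm ha, Ne.symm hb] at this

lemma aux_prod_primes_dvd {ι : Type*} [DecidableEq ι] (s : Finset ι) :
    ∀ (p : ι → MvS K ℓ) (f : MvS K ℓ),
      (∀ a ∈ s, Prime (p a)) →
      (∀ a ∈ s, ∀ b ∈ s, a ≠ b → ¬ p a ∣ p b) →
      (∀ a ∈ s, p a ∣ f) → (∏ a ∈ s, p a) ∣ f := by
  induction s using Finset.induction_on with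
  | empty => intro p f _ _ _; simp
  | @insert a s ha ih =>
    intro p f hp hnd hdvd
    obtain ⟨g, hg⟩ := hdvd a (Finset.mem_insert_self a s)
    have hgd : ∀ b ∈ s, p b ∣ g := by
      intro b hb
      have hba : b ≠ a := fun h => ha (h ▸ hb)
      have hbdvd : p b ∣ p a * g := hg ▸ hdvd b (Finset.mem_insert_of_mem hb)
      rcases (hp b (Finset.mem_insert_of_mem hb)).2.2 _ _ hbdvd with h | h
      · exact absurd h (hnd b (Finset.mem_insert_of_mem hb) a
          (Finset.mem_insert_self a s) hba)
      · exact h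
    rw [Finset.prod_insert ha, hg]
    exact mul_dvd_mul_left _ (ih p g (fun b hb => hp b (Finset.mem_insert_of_mem hb))
      (fun b hb c hc => hnd b (Finset.mem_insert_of_mem hb) c (Finset.mem_insert_of_mem hc))
      hgd)

lemma aux_homog_dvd_le {P h : MvS K ℓ} {t e : ℕ} (hP : P.IsHomogeneous t)
    (hh : h.IsHomogeneous e) (hne : h ≠ 0) (hdvd : P ∣ h) : t ≤ e := by
  obtain ⟨q, rfl⟩ := hdvd
  have hPne : P ≠ 0 := left_ne_zero_of_mul hne
  have hq : q ≠ 0 := right_ne_zero_of_mul hne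
  have hsum := MvPolynomial.sum_homogeneousComponent q
  have hex : ∃ k ∈ Finset.range (q.totalDegree + 1), homogeneousComponent k q ≠ 0 := by
    by_contra hcon
    push_neg at hcon
    exact hq (by rw [← hsum]; exact Finset.sum_eq_zero hcon)
  obtain ⟨k, hk, hk0⟩ := hex
  have hcomp : homogeneousComponent (t + k) (P * q) = P * homogeneousComponent k q := by
    conv_lhs => rw [← hsum]
    rw [Finset.mul_sum, map_sum]
    have hterm : ∀ m ∈ Finset.range (q.totalDegree + 1),
        homogeneousComponent (t + k) (P * homogeneousComponent m q)
          = if m = k then P * homogeneousComponent m q else 0 := by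
      intro m _
      have hmem : P * homogeneousComponent m q
          ∈ homogeneousSubmodule (Fin ℓ) K (t + m) :=
        (mem_homogeneousSubmodule _ _).2
          (hP.mul (homogeneousComponent_isHomogeneous m q))
      rw [homogeneousComponent_of_mem hmem]
      by_cases h : m = k
      · subst h; simp
      · rw [if_neg (fun hh' => h (by omega)), if_neg h]
    rw [Finset.sum_congr rfl hterm, Finset.sum_ite_eq' _ k, if_pos hk]
  have hne2 : P * homogeneousComponent k q ≠ 0 := mul_ne_zero hPne hk0
  have hcomp2 : homogeneousComponent (t + k) (P * q)
      = if t + k = e then P * q else 0 :=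
    homogeneousComponent_of_mem ((mem_homogeneousSubmodule _ _).2 hh)
  by_cases hte : t + k = e
  · omega
  · rw [hcomp, if_neg hte] at hcomp2
    exact absurd hcomp2 hne2

lemma aux_mem_graphForms {G : SimpleGraph (Fin ℓ)} {c : Fin ℓ → K} :
    c ∈ graphForms K G ↔ ∃ i j : Fin ℓ, G.Adj i j ∧ i < j ∧ c = eform K i j := by
  classical
  unfold graphForms
  simp only [Finset.mem_image, Finset.mem_filter, Finset.mem_univ, true_and]
  constructor
  · rintro ⟨p, ⟨hadj, hlt⟩, rfl⟩
    exact ⟨p.1, p.2, hadj, hlt, rfl⟩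
  · rintro ⟨i, j, hadj, hlt, rfl⟩
    exact ⟨(i, j), ⟨hadj, hlt⟩, rfl⟩

lemma aux_val_eform (θ : Fin ℓ → MvS K ℓ) (i j : Fin ℓ) (hij : i ≠ j) :
    ∑ t, θ t * C (eform K i j t) = θ i - θ j := by
  have h : ∀ t : Fin ℓ, θ t * C (eform K i j t)
      = (if t = i then θ i else 0) + (if t = j then -θ j else 0) := by
    intro t
    unfold eform
    by_cases h1 : t = i
    · subst h1
      rw [if_pos rfl, if_pos rfl, if_neg hij, map_one, mul_one, add_zero]
    · rw [if_neg h1, if_neg h1]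
      by_cases h2 : t = j
      · subst h2
        rw [if_pos rfl, if_pos rfl, zero_add]
        simp
      · rw [if_neg h2, if_neg h2, map_zero, mul_zero, add_zero]
  rw [Finset.sum_congr rfl (fun t _ => h t), Finset.sum_add_distrib,
    Finset.sum_ite_eq' Finset.univ i, Finset.sum_ite_eq' Finset.univ j,
    if_pos (Finset.mem_univ i), if_pos (Finset.mem_univ j), sub_eq_add_neg]

lemma aux_linForm_eform (i j : Fin ℓ) (hij : i ≠ j) :
    (linForm (eform K i j) : MvS K ℓ) = X i - X j := by
  unfold linForm
  have h : ∀ t : Fin ℓ, (C (eform K i j t) * X t : MvS K ℓ)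
      = (if t = i then X i else 0) + (if t = j then -X j else 0) := by
    intro t
    unfold eform
    by_cases h1 : t = i
    · subst h1
      rw [if_pos rfl, if_pos rfl, if_neg hij, map_one, one_mul, add_zero]
    · rw [if_neg h1, if_neg h1]
      by_cases h2 : t = j
      · subst h2
        rw [if_pos rfl, if_pos rfl, zero_add]
        simp
      · rw [if_neg h2, if_neg h2, map_zero, zero_mul, add_zero]
  rw [Finset.sum_congr rfl (fun t _ => h t), Finset.sum_add_distrib,
    Finset.sum_ite_eq' Finset.univ i, Finset.sum_ite_eq' Finset.univ j,
    if_pos (Finset.mem_univ i), if_pos (Finset.mem_univ j), sub_eq_add_neg]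

lemma aux_graph_prime {G : SimpleGraph (Fin ℓ)} :
    ∀ c ∈ graphForms K G, Prime (linForm c : MvS K ℓ) := by
  intro c hc
  obtain ⟨i, j, hadj, hlt, rfl⟩ := aux_mem_graphForms.1 hc
  rw [aux_linForm_eform i j hlt.ne]
  exact aux_prime_X_sub_X i j hlt.ne

lemma aux_graph_nondvd {G : SimpleGraph (Fin ℓ)} :
    ∀ c ∈ graphForms K G, ∀ c' ∈ graphForms K G, c ≠ c' →
      ¬ (linForm c : MvS K ℓ) ∣ linForm c' := by
  intro c hc c' hc' hne
  obtain ⟨i, j, hadj, hlt, rfl⟩ := aux_mem_graphForms.1 hc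
  obtain ⟨i', j', hadj', hlt', rfl⟩ := aux_mem_graphForms.1 hc'
  rw [aux_linForm_eform i j hlt.ne, aux_linForm_eform i' j' hlt'.ne]
  apply aux_not_dvd_X_sub i j i' j' hlt'.ne
  have hpair : ¬ (i = i' ∧ j = j') := fun ⟨e1, e2⟩ => hne (by rw [e1, e2])
  by_cases hc1 : i' = i
  · refine Or.inr ⟨?_, ?_⟩
    · exact fun h => absurd (hc1 ▸ h ▸ hlt') (lt_irrefl _)
    · exact fun h => hpair ⟨hc1.symm, h.symm⟩
  · by_cases hc2 : i' = j
    · refine Or.inr ⟨?_, ?_⟩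
      · intro h
        have : (j : Fin ℓ) < i := by rw [← hc2, ← h]; exact hlt'
        exact absurd hlt (lt_asymm this)
      · exact fun h => hlt'.ne (hc2.trans h.symm)
    · exact Or.inl ⟨hc1, hc2⟩

lemma aux_edge_dvd {G : SimpleGraph (Fin ℓ)} (θ : Fin ℓ → MvS K ℓ)
    (hθ : θ ∈ DerA (graphForms K G)) {i j : Fin ℓ} (hadj : G.Adj i j) :
    (X i - X j : MvS K ℓ) ∣ θ i - θ j := by
  have hforms := aux_forms_dvd (graphForms K G) θ hθ aux_graph_prime aux_graph_nondvd
  rcases lt_or_gt_of_ne hadj.ne with h | h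
  · have hc : eform K i j ∈ graphForms K G := aux_mem_graphForms.2 ⟨i, j, hadj, h, rfl⟩
    have := hforms _ hc
    rwa [aux_linForm_eform i j hadj.ne, aux_val_eform θ i j hadj.ne] at this
  · have hc : eform K j i ∈ graphForms K G := aux_mem_graphForms.2 ⟨j, i, hadj.symm, h, rfl⟩
    have hdd := hforms _ hc
    rw [aux_linForm_eform j i hadj.ne', aux_val_eform θ j i hadj.ne'] at hdd
    have e1 : (X i - X j : MvS K ℓ) = -(X j - X i) := by ring
    have e2 : θ i - θ j = -(θ j - θ i) := by ring
    rw [e1, e2, neg_dvd, dvd_neg]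
    exact hdd

end Aux13

/-- if adding some edge to `G` creates a triangle, then
`d_{A_G} ≥ Tri(G)`. -/
theorem stmt13 {K : Type*} [Field K] [CharZero K] {ℓ : ℕ}
    (G : SimpleGraph (Fin ℓ))
    (htri : ∃ u v : Fin ℓ, u ≠ v ∧ ¬ G.Adj u v ∧ ∃ w, G.Adj u w ∧ G.Adj v w)
    (Gen : Set (Fin ℓ → MvS K ℓ)) (hmin : IsMinGen (graphForms K G) Gen)
    (hhom : HomogGens Gen) (d : ℕ) (hd : MaxDeg Gen d) :
    TriG G ≤ d := by
  classical
  have key : ∀ u v : Fin ℓ, u ≠ v → ¬ G.Adj u v →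
      {w | G.Adj u w ∧ G.Adj v w}.ncard ≤ d := by
    intro u v huv hnadj
    have hfin : {w | G.Adj u w ∧ G.Adj v w}.Finite := Set.toFinite _
    rw [Set.ncard_eq_toFinset_card _ hfin]
    set W : Finset (Fin ℓ) := hfin.toFinset with hWdef
    set r : Fin ℓ → Fin ℓ := fun t => if t = v then u else t with hr
    set P : MvS K ℓ := ∏ w ∈ W, (X u - X w) with hP
    have hWmem : ∀ w ∈ W, G.Adj u w ∧ G.Adj v w := fun w hw => hfin.mem_toFinset.1 hw
    have hWu : ∀ w ∈ W, w ≠ u := fun w hw => ((hWmem w hw).1).ne'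
    have hWv : ∀ w ∈ W, w ≠ v := fun w hw => ((hWmem w hw).2).ne'
    have hru : r u = u := if_neg huv
    have hPhom : P.IsHomogeneous W.card := by
      have := MvPolynomial.IsHomogeneous.prod W (fun w => (X u - X w : MvS K ℓ))
        (fun _ => 1) (fun w _ => (isHomogeneous_X _ _).sub (isHomogeneous_X _ _))
      simpa using this
    have hPdvd : ∀ θ ∈ DerA (graphForms K G), P ∣ rename r (θ u - θ v) := by
      intro θ hθ
      apply aux_prod_primes_dvd W (fun w => (X u - X w : MvS K ℓ))
        (rename r (θ u - θ v))
        (fun w hw => aux_prime_X_sub_X u w (hWu w hw).symm)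
        (fun w hw w' hw' hne =>
          aux_not_dvd_X_sub u w u w' (hWu w' hw').symm
            (Or.inr ⟨hWu w' hw', fun hh => hne hh.symm⟩))
      intro w hw
      obtain ⟨hadj_u, hadj_v⟩ := hWmem w hw
      have hrw : r w = w := if_neg (hWv w hw)
      have h1 : (X u - X w : MvS K ℓ) ∣ rename r (θ u - θ w) := by
        have := map_dvd (rename r) (aux_edge_dvd θ hθ hadj_u)
        rwa [map_sub, rename_X, rename_X, hru, hrw] at this
      have h2 : (X u - X w : MvS K ℓ) ∣ rename r (θ v - θ w) := by
        have := map_dvd (rename r) (aux_edge_dvd θ hθ hadj_v)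
        rwa [map_sub, rename_X, rename_X, show r v = u from if_pos rfl, hrw] at this
      have h3 := dvd_sub h1 h2
      rwa [← map_sub, sub_sub_sub_cancel_right] at h3
    set Nu : Finset (Fin ℓ) := Finset.univ.filter (fun t => G.Adj u t) with hNu
    set θW : Fin ℓ → MvS K ℓ :=
      fun t => if t = u then ∏ j ∈ Nu, (X u - X j) else 0 with hθW
    have hθWu : θW u = ∏ j ∈ Nu, (X u - X j : MvS K ℓ) := by
      rw [hθW]; simp
    have hθWne' : ∀ t, t ≠ u → θW t = 0 := by
      intro t ht; rw [hθW]; simp [ht]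
    have hθWmem : θW ∈ DerA (graphForms K G) := by
      apply aux_mem_DerA
      intro c hc
      obtain ⟨i, j, hadj, hlt, rfl⟩ := aux_mem_graphForms.1 hc
      rw [aux_val_eform θW i j hlt.ne, aux_linForm_eform i j hlt.ne]
      by_cases h1 : i = u
      · have hj : j ≠ u := fun h => hlt.ne (h1 ▸ h ▸ rfl)
        rw [hθWne' j hj, sub_zero, h1, hθWu]
        have hjNu : j ∈ Nu := by
          rw [hNu]; simp only [Finset.mem_filter, Finset.mem_univ, true_and]
          exact h1 ▸ hadj
        exact Finset.dvd_prod_of_mem _ hjNu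
      · by_cases h2 : j = u
        · rw [hθWne' i h1, zero_sub, h2, hθWu, dvd_neg]
          have hiNu : i ∈ Nu := by
            rw [hNu]; simp only [Finset.mem_filter, Finset.mem_univ, true_and]
            exact (h2 ▸ hadj).symm
          have hfac : (X u - X i : MvS K ℓ) ∣ ∏ j' ∈ Nu, (X u - X j') :=
            Finset.dvd_prod_of_mem _ hiNu
          have e1 : (X i - X u : MvS K ℓ) = -(X u - X i) := by ring
          rw [e1, neg_dvd]
          exact hfac
        · rw [hθWne' i h1, hθWne' j h2, sub_zero]
          exact dvd_zero _
    have hθWne : rename r (θW u - θW v) ≠ 0 := by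
      have e1 : θW u - θW v = ∏ j' ∈ Nu, (X u - X j' : MvS K ℓ) := by
        rw [hθWne' v (Ne.symm huv), sub_zero, hθWu]
      rw [e1, map_prod]
      apply Finset.prod_ne_zero_iff.2
      intro j' hj'
      have hadj : G.Adj u j' := by
        rw [hNu] at hj'
        exact (Finset.mem_filter.1 hj').2
      have hj'u : j' ≠ u := hadj.ne'
      have hj'v : j' ≠ v := fun h => hnadj (h ▸ hadj)
      rw [map_sub, rename_X, rename_X, hru, show r j' = j' from if_neg hj'v]
      exact (aux_prime_X_sub_X u j' hj'u.symm).ne_zero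
    obtain ⟨cf, hsupp, hsum⟩ := Submodule.mem_span_set.1 (hmin.1.2 θW hθWmem)
    have h1 : θW u - θW v = ∑ g ∈ cf.support, cf g * (g u - g v) := by
      rw [← hsum, Finsupp.sum]
      simp only [Finset.sum_apply, Pi.smul_apply, smul_eq_mul, mul_sub]
      rw [Finset.sum_sub_distrib]
    have hdecomp : rename r (θW u - θW v)
        = ∑ g ∈ cf.support, rename r (cf g) * rename r (g u - g v) := by
      rw [h1, map_sum]
      simp only [map_mul]
    have hexg : ∃ g ∈ cf.support, rename r (g u - g v) ≠ 0 := by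
      by_contra hcon
      push_neg at hcon
      apply hθWne
      rw [hdecomp]
      apply Finset.sum_eq_zero
      intro g hg
      rw [hcon g hg, mul_zero]
    obtain ⟨g, hgsupp, hgne⟩ := hexg
    have hgGen : g ∈ Gen := hsupp hgsupp
    obtain ⟨hgne0, e, hghom⟩ := hhom g hgGen
    have hed : e ≤ d := hd.1 g hgGen e hghom
    have hhomg : (rename r (g u - g v)).IsHomogeneous e :=
      ((hghom u).sub (hghom v)).rename_isHomogeneous
    have hdvdg : P ∣ rename r (g u - g v) := hPdvd g (hmin.1.1 g hgGen)
    have := aux_homog_dvd_le hPhom hhomg hgne hdvdg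
    omega
  obtain ⟨u₀, v₀, huv₀, hnadj₀, w₀, hw₀⟩ := htri
  unfold TriG
  apply csSup_le
  · exact ⟨_, u₀, v₀, huv₀, hnadj₀, rfl⟩
  · rintro n ⟨u, v, huv, hnadj, rfl⟩
    exact key u v huv hnadj
end

section
/- Let B ⊆ A be central arrangements in K^ℓ with B solvable in A. Then for any H ∈ A \ B, the restriction satisfies |A^H| = |B|. -/
open MvPolynomial

variable {K : Type*} [Field K] {ℓ : ℕ}

/-! Write `H_v` for the hyperplane `hypl v`. In finite dimension a family of hyperplanes is
determined by the span of its defining forms and conversely (the annihilator correspondence),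
so `H_c ∩ H = H_α ∩ H` exactly when `span {c, h} = span {α, h}`. For `c ∉ B` solvability
provides `α ∈ B` with `rank {c, h, α} = 2`, which forces this equality of spans; hence every
`H_c ∩ H` is already some `H_α ∩ H` with `α ∈ B`. Conversely, for distinct `α, β ∈ B`,
`rank {α, β, h} = 3` rules out `span {α, h} = span {β, h}`, so `α ↦ H_α ∩ H` is injective on `B`. -/

open Module Submodule

lemma ellf_eq_toDual (c : Fin ℓ → K) : ellf c = (Pi.basisFun K (Fin ℓ)).toDual c :=
  (Pi.basisFun K (Fin ℓ)).ext fun j => by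
    rw [Basis.toDual_apply_left]
    simp [ellf, Pi.single_apply]

lemma iInf_hypl_eq_dualCoannihilator (s : Set (Fin ℓ → K)) :
    ⨅ v ∈ s, hypl v =
      ((span K s).map (Pi.basisFun K (Fin ℓ)).toDualEquiv.toLinearMap).dualCoannihilator := by
  rw [map_span]
  refine SetLike.coe_injective ?_
  ext x
  simp only [coe_dualCoannihilator_span, Set.forall_mem_image, SetLike.mem_coe, mem_iInf,
    hypl, LinearMap.mem_ker, ellf_eq_toDual, LinearEquiv.coe_coe, Basis.toDualEquiv_apply,
    Set.mem_ofPred_eq]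

lemma iInf_hypl_eq_iff {s t : Set (Fin ℓ → K)} :
    ⨅ v ∈ s, hypl v = ⨅ v ∈ t, hypl v ↔ span K s = span K t := by
  rw [iInf_hypl_eq_dualCoannihilator, iInf_hypl_eq_dualCoannihilator]
  refine ⟨fun hst => ?_, fun hst => by rw [hst]⟩
  have := congrArg dualAnnihilator hst
  rw [Subspace.dualCoannihilator_dualAnnihilator_eq,
    Subspace.dualCoannihilator_dualAnnihilator_eq] at this
  exact map_injective_of_injective (LinearEquiv.injective _) this

lemma hypl_eq_iff {a b : Fin ℓ → K} : hypl a = hypl b ↔ K ∙ a = K ∙ b := by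
  simpa using iInf_hypl_eq_iff (s := {a}) (t := {b})

lemma hypl_inf_eq_iff {a b c : Fin ℓ → K} :
    hypl a ⊓ hypl c = hypl b ⊓ hypl c ↔ span K {a, c} = span K {b, c} := by
  simpa only [iInf_insert, iInf_singleton] using iInf_hypl_eq_iff (s := {a, c}) (t := {b, c})

lemma finrank_span_pair_le (a b : Fin ℓ → K) : finrank K (span K {a, b}) ≤ 2 := by
  classical
  exact (finrank_span_le_card _).trans (by simpa using Finset.card_le_two)

lemma finrank_span_pair_of_hypl_ne {a b : Fin ℓ → K} (ha : a ≠ 0) (hb : b ≠ 0)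
    (hab : hypl a ≠ hypl b) : finrank K (span K {a, b}) = 2 := by
  have hind : LinearIndependent K ![a, b] := by
    refine linearIndependent_fin2.mpr ⟨hb, fun t ht => hab ?_⟩
    simp only [Matrix.cons_val_one, Matrix.cons_val_zero] at ht
    have ht0 : t ≠ 0 := by rintro rfl; exact ha (by simpa using ht.symm)
    rw [hypl_eq_iff, ← ht, span_singleton_smul_eq (IsUnit.mk0 t ht0)]
  have := finrank_span_eq_card hind
  rwa [Fintype.card_fin, Matrix.range_cons, Matrix.range_cons, Matrix.range_empty,
    Set.union_empty, Set.singleton_union] at this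

namespace Solvable

variable {A B : Finset (Fin ℓ → K)} {h : Fin ℓ → K}

lemma injOn_inf_hypl (hsolv : Solvable B A) (hhA : h ∈ A) (hhB : h ∉ B) :
    Set.InjOn (fun α => hypl α ⊓ hypl h) B := by
  obtain ⟨-, hrank_three, -, -⟩ := hsolv
  intro α hα β hβ hαβ
  by_contra hne
  have hspan : span K {α, β, h} = span K {α, h} := by
    rw [span_insert, hypl_inf_eq_iff.mp hαβ.symm, ← span_insert,
      Set.insert_eq_of_mem (Set.mem_insert α _)]
  have hrk : rkSet {α, β, h} = 3 := hrank_three α hα β hβ hne h hhA hhB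
  have := finrank_span_pair_le α h
  rw [rkSet, hspan] at hrk
  omega

lemma exists_inf_hypl_eq (hsolv : Solvable B A) (hA : IsArrangement A) (hhA : h ∈ A)
    (hhB : h ∉ B) {c : Fin ℓ → K} (hcA : c ∈ A) (hch : c ≠ h) :
    ∃ α ∈ B, hypl c ⊓ hypl h = hypl α ⊓ hypl h := by
  obtain ⟨hBA, -, hexists_rank_two, -⟩ := hsolv
  by_cases hcB : c ∈ B
  · exact ⟨c, hcB, rfl⟩
  obtain ⟨α, hαB, hrk⟩ := hexists_rank_two c hcA hcB h hhA hhB hch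
  have hαA := hBA hαB
  have hrk_pair {a : Fin ℓ → K} (haA : a ∈ A) (hah : a ≠ h) : finrank K (span K {a, h}) = 2 :=
    finrank_span_pair_of_hypl_ne (hA.1 a haA) (hA.1 h hhA) (mt (hA.2 a haA h hhA) hah)
  have hc : span K {c, h} = span K {c, h, α} :=
    eq_of_le_of_finrank_le (span_mono (by grind)) (by rw [hrk_pair hcA hch]; exact hrk.le)
  have hα : span K {α, h} = span K {c, h, α} :=
    eq_of_le_of_finrank_le (span_mono (by grind))
      (by rw [hrk_pair hαA (ne_of_mem_of_not_mem hαB hhB)]; exact hrk.le)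
  exact ⟨α, hαB, hypl_inf_eq_iff.mpr (hc.trans hα.symm)⟩

lemma restrictCount_erase_eq_card [DecidableEq (Fin ℓ → K)] (hsolv : Solvable B A)
    (hA : IsArrangement A) (hhA : h ∈ A) (hhB : h ∉ B) : restrictCount (A.erase h) h = B.card := by
  let := Classical.decEq (Submodule K (Fin ℓ → K))
  have himage : (A.erase h).image (fun c => hypl c ⊓ hypl h) =
      B.image (fun α => hypl α ⊓ hypl h) := by
    refine (Finset.image_subset_image (Finset.subset_erase.mpr ⟨hsolv.1, hhB⟩)).antisymm' ?_
    intro _ hx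
    obtain ⟨c, hc, rfl⟩ := Finset.mem_image.mp hx
    obtain ⟨α, hαB, hcα⟩ := hsolv.exists_inf_hypl_eq hA hhA hhB (Finset.mem_of_mem_erase hc)
      (Finset.ne_of_mem_erase hc)
    exact Finset.mem_image.mpr ⟨α, hαB, hcα.symm⟩
  rw [restrictCount, himage, Finset.card_image_of_injOn (hsolv.injOn_inf_hypl hhA hhB)]

end Solvable

theorem stmt15_general {K : Type*} [Field K] [DecidableEq K] {ℓ : ℕ}
    (A B : Finset (Fin ℓ → K)) (hA : IsArrangement A)
    (hsolv : Solvable B A)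
    (h : Fin ℓ → K) (hhA : h ∈ A) (hhB : h ∉ B) :
    restrictCount (A.erase h) h = B.card :=
  hsolv.restrictCount_erase_eq_card hA hhA hhB

/-- if `B` is solvable in `A` then `|A^H| = |B|` for any `H ∈ A \ B`. -/
theorem stmt15 {K : Type*} [Field K] [CharZero K] [DecidableEq K] {ℓ : ℕ}
    (A B : Finset (Fin ℓ → K)) (hA : IsArrangement A)
    (hrk : 3 ≤ rkSet (A : Set (Fin ℓ → K)))
    (hsolv : Solvable B A)
    (h : Fin ℓ → K) (hhA : h ∈ A) (hhB : h ∉ B) :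
    restrictCount (A.erase h) h = B.card :=
  stmt15_general A B hA hsolv h hhA hhB
end
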